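/- arXiv:1903.11857 — 9 statements merged into one kernel-verified Lean document; each statement's English description precedes it below -/
import Mathlib

section
/- For simple-structure BBAs, Dempster's rule reduces exactly to the aggregation step of the original ER algorithm: let H = {H_1,…,H_N} with N ≥ 2 and let m1, m2 be BBAs on H whose focal elements are singletons or the whole frame H (i.e. m(A) = 0 unless A is a singleton or A = H). If the singleton conflict c = Σ_{j≠p} m1({H_j})·m2({H_p}) < 1, then the overall conflict Σ_{B∩C=∅} m1(B)·m2(C) equals c, and the Dempster combination satisfies (m1⊕m2)({H_n}) = K·[m1({H_n})·m2({H_n}) + m1({H_n})·m2(H) + m1(H)·m2({H_n})] for each n, (m1⊕m2)(H) = K·m1(H)·m2(H), where K = (1 − c)^{-1}, and (m1⊕m2)(A) = 0 for every subset A that is neither a singleton nor H. -/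
open Finset

/-- A basic belief assignment (BBA) on a finite nonempty frame `Θ`. -/
def IsBBA {Θ : Type*} [Fintype Θ] [DecidableEq Θ] (m : Finset Θ → ℝ) : Prop :=
  m ∅ = 0 ∧ (∀ A, 0 ≤ m A) ∧ ∑ A : Finset Θ, m A = 1

/-- Shafer's reliability discounting of `m` by the reliability factor `α`. -/
def rdiscount {Θ : Type*} [Fintype Θ] [DecidableEq Θ] (α : ℝ) (m : Finset Θ → ℝ) :
    Finset Θ → ℝ :=
  fun A => if A = Finset.univ then α * m A + (1 - α) else α * m A

/-- The conflict between two mass functions. -/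
def conflict {Θ : Type*} [Fintype Θ] [DecidableEq Θ] (m1 m2 : Finset Θ → ℝ) : ℝ :=
  ∑ B : Finset Θ, ∑ C : Finset Θ, if B ∩ C = ∅ then m1 B * m2 C else 0

/-- Dempster's rule of combination. -/
noncomputable def dempster {Θ : Type*} [Fintype Θ] [DecidableEq Θ] (m1 m2 : Finset Θ → ℝ) :
    Finset Θ → ℝ :=
  fun A => if A = ∅ then 0
    else (∑ B : Finset Θ, ∑ C : Finset Θ, if B ∩ C = A then m1 B * m2 C else 0) /
      (1 - conflict m1 m2)

/-- Iterated Dempster combination of `d 0, …, d i`. -/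
noncomputable def combUpTo {Θ : Type*} [Fintype Θ] [DecidableEq Θ] (d : ℕ → Finset Θ → ℝ) :
    ℕ → Finset Θ → ℝ
  | 0 => d 0
  | i + 1 => dempster (combUpTo d (i)) (d (i + 1))

/-- The assessment BBA on the frame `{H_1,…,H_N}` determined by belief degrees `β`. -/
def assessBBA {N : ℕ} (β : Fin N → ℝ) : Finset (Fin N) → ℝ :=
  fun A => if A = Finset.univ then 1 - ∑ n, β n
    else ∑ n : Fin N, if A = {n} then β n else 0

/-- An importance basic belief assignment (IBBA): `ω` is the mass on the
indecisiveness element `Ω`. -/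
def IsIBBA {Θ : Type*} [Fintype Θ] [DecidableEq Θ] (m : Finset Θ → ℝ) (ω : ℝ) : Prop :=
  m ∅ = 0 ∧ (∀ A, 0 ≤ m A) ∧ 0 ≤ ω ∧ (∑ A : Finset Θ, m A) + ω = 1

/-- Importance discounting of a BBA `m` by the importance factor `β`. -/
def impDiscount {Θ : Type*} [Fintype Θ] [DecidableEq Θ] (β : ℝ) (m : Finset Θ → ℝ) :
    (Finset Θ → ℝ) × ℝ :=
  (fun A => β * m A, 1 - β)

/-- The extended Dempster rule of combination of two IBBAs. -/
noncomputable def edComb {Θ : Type*} [Fintype Θ] [DecidableEq Θ]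
    (p q : (Finset Θ → ℝ) × ℝ) : (Finset Θ → ℝ) × ℝ :=
  (fun A => if A = ∅ then 0
      else (1 - conflict p.1 q.1)⁻¹ *
        ((∑ B : Finset Θ, ∑ C : Finset Θ, if B ∩ C = A then p.1 B * q.1 C else 0) +
          p.1 A * q.2 + p.2 * q.1 A),
    (1 - conflict p.1 q.1)⁻¹ * (p.2 * q.2))

/-- Iterated extended Dempster combination of `d 0, …, d i`. -/
noncomputable def edCombUpTo {Θ : Type*} [Fintype Θ] [DecidableEq Θ] (d : ℕ → (Finset Θ → ℝ) × ℝ) :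
    ℕ → (Finset Θ → ℝ) × ℝ
  | 0 => d 0
  | i + 1 => edComb (edCombUpTo d i) (d (i + 1))

/-- The singleton conflict `Σ_{j≠p} m1({H_j})·m2({H_p})`. -/
def singConflict {N : ℕ} (m1 m2 : Finset (Fin N) → ℝ) : ℝ :=
  ∑ j : Fin N, ∑ p : Fin N, if j ≠ p then m1 {j} * m2 {p} else 0

/-- One recursive aggregation step of the original ER algorithm. -/
noncomputable def erStep {N : ℕ} (s : (Fin N → ℝ) × ℝ) (b : Fin N → ℝ) (h : ℝ) : (Fin N → ℝ) × ℝ :=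
  (fun n => (1 - ∑ j : Fin N, ∑ p : Fin N, if p ≠ j then s.1 j * b p else 0)⁻¹ *
      (s.1 n * b n + s.1 n * h + s.2 * b n),
   (1 - ∑ j : Fin N, ∑ p : Fin N, if p ≠ j then s.1 j * b p else 0)⁻¹ * (s.2 * h))

/-- The recursively defined masses of the original ER algorithm. -/
noncomputable def erSeq {N : ℕ} (b : ℕ → Fin N → ℝ) (h : ℕ → ℝ) : ℕ → (Fin N → ℝ) × ℝ
  | 0 => (b 0, h 0)
  | i + 1 => erStep (erSeq b h i) (b (i + 1)) (h (i + 1))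

/-- One recursive aggregation step of the modified ER algorithm, on triples
`(masses on singletons, m̃_H, m̄_H)`. -/
noncomputable def merStep {N : ℕ} (s : (Fin N → ℝ) × ℝ × ℝ) (b : Fin N → ℝ) (tld brd : ℝ) :
    (Fin N → ℝ) × ℝ × ℝ :=
  (fun n => (1 - ∑ j : Fin N, ∑ p : Fin N, if p ≠ j then s.1 j * b p else 0)⁻¹ *
      (s.1 n * b n + s.1 n * (brd + tld) + (s.2.2 + s.2.1) * b n),
   (1 - ∑ j : Fin N, ∑ p : Fin N, if p ≠ j then s.1 j * b p else 0)⁻¹ *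
      (s.2.1 * tld + s.2.1 * brd + s.2.2 * tld),
   (1 - ∑ j : Fin N, ∑ p : Fin N, if p ≠ j then s.1 j * b p else 0)⁻¹ * (s.2.2 * brd))

/-- The recursively defined masses of the modified ER algorithm. -/
noncomputable def merSeq {N : ℕ} (b : ℕ → Fin N → ℝ) (tld brd : ℕ → ℝ) : ℕ → (Fin N → ℝ) × ℝ × ℝ
  | 0 => (b 0, tld 0, brd 0)
  | i + 1 => merStep (merSeq b tld brd i) (b (i + 1)) (tld (i + 1)) (brd (i + 1))

/-- Reliability-importance discounting: the mass-function part `m^{α,β}`. -/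
def riDiscount {Θ : Type*} [Fintype Θ] [DecidableEq Θ] (α β : ℝ) (m : Finset Θ → ℝ) :
    Finset Θ → ℝ :=
  fun A => if A = Finset.univ then α * β * m A + (1 - α) * β else α * β * m A


section Aux
variable {N : ℕ}

lemma aux_singleton_ne_univ (hN : 2 ≤ N) (j : Fin N) : ({j} : Finset (Fin N)) ≠ Finset.univ := by
  intro h
  have := congrArg Finset.card h
  simp [Finset.card_univ] at this
  omega

lemma aux_univ_ne_empty (hN : 2 ≤ N) : (Finset.univ : Finset (Fin N)) ≠ ∅ := by
  intro h
  have := Finset.card_univ (α := Fin N)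
  rw [h] at this
  simp at this
  omega

lemma aux_sum_simple (hN : 2 ≤ N) (F : Finset (Fin N) → ℝ)
    (hF : ∀ A, (∀ n : Fin N, A ≠ {n}) → A ≠ Finset.univ → F A = 0) :
    ∑ A : Finset (Fin N), F A = (∑ j : Fin N, F {j}) + F Finset.univ := by
  classical
  set S : Finset (Finset (Fin N)) :=
    insert Finset.univ ((Finset.univ : Finset (Fin N)).image fun j => ({j} : Finset (Fin N)))
    with hS
  have hsub : S ⊆ Finset.univ := Finset.subset_univ _
  have h0 : ∀ x ∈ (Finset.univ : Finset (Finset (Fin N))), x ∉ S → F x = 0 := by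
    intro x _ hx
    rw [hS] at hx
    simp only [Finset.mem_insert, Finset.mem_image, Finset.mem_univ, true_and] at hx
    push_neg at hx
    exact hF x (fun n h => hx.2 n h.symm) hx.1
  rw [← Finset.sum_subset hsub h0, hS]
  have hnotmem : (Finset.univ : Finset (Fin N)) ∉
      (Finset.univ : Finset (Fin N)).image (fun j => ({j} : Finset (Fin N))) := by
    simp only [Finset.mem_image, Finset.mem_univ, true_and]
    rintro ⟨j, hj⟩
    exact aux_singleton_ne_univ hN j hj
  rw [Finset.sum_insert hnotmem, Finset.sum_image (by intro a _ b _ h; simpa using h)]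
  ring

lemma aux_sing_inter (j p : Fin N) :
    (({j} : Finset (Fin N)) ∩ {p} = ∅) ↔ j ≠ p := by
  constructor
  · intro h hjp; subst hjp; simp at h
  · intro h; rw [Finset.inter_singleton_of_notMem (by simpa using fun e => h e.symm)]

end Aux

/-- For simple-structure BBAs, Dempster's rule reduces exactly to the
aggregation step of the original ER algorithm. -/
theorem dempster_simple_structure (N : ℕ) (hN : 2 ≤ N)
    (m1 m2 : Finset (Fin N) → ℝ) (h1 : IsBBA m1) (h2 : IsBBA m2)
    (hs1 : ∀ A : Finset (Fin N), (∀ n : Fin N, A ≠ {n}) → A ≠ Finset.univ → m1 A = 0)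
    (hs2 : ∀ A : Finset (Fin N), (∀ n : Fin N, A ≠ {n}) → A ≠ Finset.univ → m2 A = 0)
    (hc : singConflict m1 m2 < 1) :
    conflict m1 m2 = singConflict m1 m2 ∧
    (∀ n : Fin N, dempster m1 m2 {n} = (1 - singConflict m1 m2)⁻¹ *
      (m1 {n} * m2 {n} + m1 {n} * m2 Finset.univ + m1 Finset.univ * m2 {n})) ∧
    dempster m1 m2 Finset.univ =
      (1 - singConflict m1 m2)⁻¹ * (m1 Finset.univ * m2 Finset.univ) ∧
    (∀ A : Finset (Fin N), (∀ n : Fin N, A ≠ {n}) → A ≠ Finset.univ →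
      dempster m1 m2 A = 0) := by
  classical
  have hne : ∀ j : Fin N, ({j} : Finset (Fin N)) ≠ Finset.univ := aux_singleton_ne_univ hN
  have hue : (Finset.univ : Finset (Fin N)) ≠ ∅ := aux_univ_ne_empty hN
  -- decompose a double sum over simple structure
  have hdouble : ∀ (P : Finset (Fin N) → Finset (Fin N) → Prop)
      [∀ B C, Decidable (P B C)],
      (∑ B : Finset (Fin N), ∑ C : Finset (Fin N), if P B C then m1 B * m2 C else 0) =
      (∑ j : Fin N, ∑ p : Fin N, if P {j} {p} then m1 {j} * m2 {p} else 0) +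
      (∑ j : Fin N, if P {j} Finset.univ then m1 {j} * m2 Finset.univ else 0) +
      ((∑ p : Fin N, if P Finset.univ {p} then m1 Finset.univ * m2 {p} else 0) +
        (if P Finset.univ Finset.univ then m1 Finset.univ * m2 Finset.univ else 0)) := by
    intro P _
    have inner : ∀ B : Finset (Fin N),
        (∑ C : Finset (Fin N), if P B C then m1 B * m2 C else 0) =
        (∑ p : Fin N, if P B {p} then m1 B * m2 {p} else 0) +
        (if P B Finset.univ then m1 B * m2 Finset.univ else 0) := by
      intro B
      exact aux_sum_simple hN _ (by
        intro A hA1 hA2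
        simp [hs2 A hA1 hA2])
    calc (∑ B : Finset (Fin N), ∑ C : Finset (Fin N), if P B C then m1 B * m2 C else 0)
        = ∑ B : Finset (Fin N),
            ((∑ p : Fin N, if P B {p} then m1 B * m2 {p} else 0) +
              (if P B Finset.univ then m1 B * m2 Finset.univ else 0)) := by
          exact Finset.sum_congr rfl fun B _ => inner B
      _ = _ := by
          rw [Finset.sum_add_distrib,
            aux_sum_simple hN (fun B => ∑ p : Fin N, if P B {p} then m1 B * m2 {p} else 0)
              (by intro A hA1 hA2; simp [hs1 A hA1 hA2]),
            aux_sum_simple hN (fun B => if P B Finset.univ then m1 B * m2 Finset.univ else 0)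
              (by intro A hA1 hA2; simp [hs1 A hA1 hA2])]
          ring
  have hconf : conflict m1 m2 = singConflict m1 m2 := by
    rw [conflict, hdouble (fun B C => B ∩ C = ∅), singConflict]
    have e1 : ∀ j p : Fin N,
        (if ({j} : Finset (Fin N)) ∩ {p} = ∅ then m1 {j} * m2 {p} else 0) =
        (if j ≠ p then m1 {j} * m2 {p} else 0) := by
      intro j p; exact if_congr (aux_sing_inter j p) rfl rfl
    simp only [e1, Finset.inter_univ, Finset.univ_inter, Finset.singleton_ne_empty,
      if_false, hue, Finset.sum_const_zero, add_zero]
  have hden : (1 - conflict m1 m2) = 1 - singConflict m1 m2 := by rw [hconf]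
  refine ⟨hconf, ?_, ?_, ?_⟩
  · intro n
    have hnum : (∑ B : Finset (Fin N), ∑ C : Finset (Fin N),
        if B ∩ C = {n} then m1 B * m2 C else 0) =
        m1 {n} * m2 {n} + m1 {n} * m2 Finset.univ + m1 Finset.univ * m2 {n} := by
      rw [hdouble (fun B C => B ∩ C = ({n} : Finset (Fin N)))]
      have e1 : ∀ j p : Fin N,
          (if ({j} : Finset (Fin N)) ∩ {p} = {n} then m1 {j} * m2 {p} else 0) =
          (if j = n ∧ p = n then m1 {j} * m2 {p} else 0) := by
        intro j p
        refine if_congr ?_ rfl rfl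
        constructor
        · intro h
          by_cases hjp : j = p
          · subst hjp; simp at h; subst h; exact ⟨rfl, rfl⟩
          · rw [(aux_sing_inter j p).2 hjp] at h
            exact absurd h.symm (Finset.singleton_ne_empty n)
        · rintro ⟨rfl, rfl⟩; simp
      simp only [e1, Finset.inter_univ, Finset.univ_inter, Finset.inter_self]
      rw [if_neg (fun h => hne n h.symm)]
      have s1 : (∑ j : Fin N, ∑ p : Fin N,
          if j = n ∧ p = n then m1 {j} * m2 {p} else 0) = m1 {n} * m2 {n} := by
        rw [Finset.sum_eq_single n]
        · rw [Finset.sum_eq_single n]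
          · simp
          · intro p _ hp; rw [if_neg (fun h => hp h.2)]
          · intro h; exact absurd (Finset.mem_univ n) h
        · intro j _ hj
          apply Finset.sum_eq_zero; intro p _; rw [if_neg (fun h => hj h.1)]
        · intro h; exact absurd (Finset.mem_univ n) h
      have s2 : (∑ j : Fin N, if ({j} : Finset (Fin N)) = {n}
          then m1 {j} * m2 Finset.univ else 0) = m1 {n} * m2 Finset.univ := by
        rw [Finset.sum_eq_single n]
        · simp
        · intro j _ hj; rw [if_neg (by simpa using hj)]
        · intro h; exact absurd (Finset.mem_univ n) h
      have s3 : (∑ p : Fin N, if ({p} : Finset (Fin N)) = {n}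
          then m1 Finset.univ * m2 {p} else 0) = m1 Finset.univ * m2 {n} := by
        rw [Finset.sum_eq_single n]
        · simp
        · intro p _ hp; rw [if_neg (by simpa using hp)]
        · intro h; exact absurd (Finset.mem_univ n) h
      rw [s1, s2, s3]; ring
    rw [dempster]
    simp only [Finset.singleton_ne_empty, if_false]
    rw [hnum, hden, div_eq_inv_mul]
  · have hnum : (∑ B : Finset (Fin N), ∑ C : Finset (Fin N),
        if B ∩ C = Finset.univ then m1 B * m2 C else 0) =
        m1 Finset.univ * m2 Finset.univ := by
      rw [hdouble (fun B C => B ∩ C = (Finset.univ : Finset (Fin N)))]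
      have e1 : ∀ (j : Fin N) (C : Finset (Fin N)),
          ({j} : Finset (Fin N)) ∩ C ≠ Finset.univ := by
        intro j C h
        have h2 : (Finset.univ : Finset (Fin N)) ⊆ {j} := h ▸ Finset.inter_subset_left
        exact hne j (Finset.Subset.antisymm (Finset.subset_univ _) h2)
      simp only [if_neg (e1 _ _), Finset.sum_const_zero, Finset.univ_inter,
        Finset.inter_self, if_pos rfl, if_true]
      have : ∀ p : Fin N, (if ({p} : Finset (Fin N)) = Finset.univ
          then m1 Finset.univ * m2 {p} else 0) = 0 := fun p => if_neg (hne p)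
      simp only [this, Finset.sum_const_zero]
      ring
    rw [dempster]
    rw [if_neg hue, hnum, hden, div_eq_inv_mul]
  · intro A hA1 hA2
    by_cases hAe : A = ∅
    · subst hAe; rw [dempster]; simp
    · have hnum : (∑ B : Finset (Fin N), ∑ C : Finset (Fin N),
          if B ∩ C = A then m1 B * m2 C else 0) = 0 := by
        rw [hdouble (fun B C => B ∩ C = A)]
        have g1 : ∀ j p : Fin N, (({j} : Finset (Fin N)) ∩ {p} ≠ A) := by
          intro j p h
          by_cases hjp : j = p
          · subst hjp; simp at h; exact hA1 j h.symm
          · rw [(aux_sing_inter j p).2 hjp] at h; exact hAe h.symm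
        have g2 : ∀ j : Fin N, (({j} : Finset (Fin N)) ∩ Finset.univ ≠ A) := by
          intro j h; rw [Finset.inter_univ] at h; exact hA1 j h.symm
        have g3 : ∀ p : Fin N, ((Finset.univ : Finset (Fin N)) ∩ {p} ≠ A) := by
          intro p h; rw [Finset.univ_inter] at h; exact hA1 p h.symm
        have g4 : (Finset.univ : Finset (Fin N)) ∩ Finset.univ ≠ A := by
          intro h; rw [Finset.inter_self] at h; exact hA2 h.symm
        simp only [if_neg (g1 _ _), if_neg (g2 _), if_neg (g3 _), if_neg g4,
          Finset.sum_const_zero, add_zero]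
      rw [dempster, if_neg hAe, hnum, zero_div]
end

section
/- (Theorem 1) The original ER algorithm follows the reliability discounting and combination scheme: let H = {H_1,…,H_N} with N ≥ 2, let β_{n,i} ≥ 0 with Σ_{n=1}^N β_{n,i} ≤ 1 be the belief degrees of L assessments (i = 1,…,L), and let w_i ∈ [0,1] be their weights. Let m_i be the assessment BBA of the i-th assessment and m_i^{w_i} its Shafer reliability discounting by w_i. Define the original ER sequences by m_{n,I(1)} = w_1·β_{n,1}, m_{H,I(1)} = 1 − w_1·Σ_n β_{n,1}, and recursively m_{n,I(i+1)} = K_{I(i+1)}·[m_{n,I(i)}·w_{i+1}β_{n,i+1} + m_{n,I(i)}·m_{H,i+1} + m_{H,I(i)}·w_{i+1}β_{n,i+1}] and m_{H,I(i+1)} = K_{I(i+1)}·[m_{H,I(i)}·m_{H,i+1}], where m_{H,i+1} = 1 − w_{i+1}Σ_n β_{n,i+1} and K_{I(i+1)} = [1 − Σ_j Σ_{p≠j} m_{j,I(i)}·w_{i+1}β_{p,i+1}]^{-1}. If at every step the conflict is strictly less than 1, then for every i, m_{n,I(i)} = (m_1^{w_1} ⊕ ⋯ ⊕ m_i^{w_i})({H_n})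 and m_{H,I(i)} = (m_1^{w_1} ⊕ ⋯ ⊕ m_i^{w_i})(H); in particular the combined belief degrees β_n = m_{n,I(L)} and β_H = m_{H,I(L)} of the original ER algorithm equal the values of the Dempster combination of the L reliability-discounted BBAs on {H_n} and H respectively. -/
open Finset

def mySupp {N : ℕ} (m : Finset (Fin N) → ℝ) : Prop :=
  ∀ A : Finset (Fin N), (∀ n, A ≠ ({n} : Finset (Fin N))) → A ≠ Finset.univ → m A = 0

lemma my_univ_ne_singleton {N : ℕ} (hN : 2 ≤ N) (n : Fin N) :
    (Finset.univ : Finset (Fin N)) ≠ {n} := by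
  intro hEq
  have := congrArg Finset.card hEq
  simp [Finset.card_univ] at this
  omega

lemma my_sum_eq_supp {N : ℕ} (hN : 2 ≤ N) (f : Finset (Fin N) → ℝ)
    (hf : ∀ A, (∀ n, A ≠ ({n} : Finset (Fin N))) → A ≠ Finset.univ → f A = 0) :
    ∑ A : Finset (Fin N), f A = (∑ n : Fin N, f {n}) + f Finset.univ := by
  classical
  set T : Finset (Finset (Fin N)) :=
    (Finset.univ.image (fun n : Fin N => ({n} : Finset (Fin N)))) ∪ {Finset.univ} with hT
  have h1 : ∑ A : Finset (Fin N), f A = ∑ A ∈ T, f A := by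
    refine (Finset.sum_subset (Finset.subset_univ T) ?_).symm
    intro A _ hA
    refine hf A ?_ ?_
    · intro n hn
      exact hA (by simp [hT, hn])
    · intro hEq
      exact hA (by simp [hT, hEq])
  rw [h1, hT, Finset.sum_union, Finset.sum_image, Finset.sum_singleton]
  · intro a _ b _ hab
    exact Finset.singleton_injective hab
  · rw [Finset.disjoint_singleton_right]
    simp only [Finset.mem_image, Finset.mem_univ, true_and]
    rintro ⟨n, hn⟩
    exact my_univ_ne_singleton hN n hn.symm

lemma my_conflict_eq {N : ℕ} (hN : 2 ≤ N) (m1 m2 : Finset (Fin N) → ℝ)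
    (h1 : mySupp m1) (h2 : mySupp m2) :
    conflict m1 m2 = ∑ j : Fin N, ∑ p : Fin N, if p ≠ j then m1 {j} * m2 {p} else 0 := by
  haveI : Nonempty (Fin N) := ⟨⟨0, by omega⟩⟩
  have huniv : (Finset.univ : Finset (Fin N)) ≠ ∅ := Finset.univ_nonempty.ne_empty
  unfold conflict
  rw [my_sum_eq_supp hN _ (by
    intro A hA1 hA2
    apply Finset.sum_eq_zero
    intro C _
    rw [h1 A hA1 hA2]
    simp)]
  have hinner : ∀ B : Finset (Fin N),
      (∑ C : Finset (Fin N), if B ∩ C = ∅ then m1 B * m2 C else 0) =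
      (∑ p : Fin N, if B ∩ {p} = ∅ then m1 B * m2 {p} else 0) +
      (if B ∩ Finset.univ = ∅ then m1 B * m2 Finset.univ else 0) := by
    intro B
    exact my_sum_eq_supp hN _ (by
      intro C hC1 hC2
      rw [h2 C hC1 hC2]
      simp)
  simp only [hinner]
  have e1 : ∀ j : Fin N, ({j} : Finset (Fin N)) ∩ Finset.univ = {j} := by
    intro j; simp
  have e2 : (Finset.univ : Finset (Fin N)) ∩ Finset.univ = Finset.univ := by simp
  simp only [e1, e2, Finset.singleton_ne_empty, huniv, if_false, add_zero]
  have e3 : ∀ j p : Fin N, (({j} : Finset (Fin N)) ∩ {p} = ∅) ↔ p ≠ j := by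
    intro j p
    constructor
    · intro hEq hpj; subst hpj; simp at hEq
    · intro hpj
      exact Finset.singleton_inter_of_notMem (by simpa using fun hh => hpj hh.symm)
  have e4 : ∀ p : Fin N, (Finset.univ : Finset (Fin N)) ∩ {p} = {p} := by intro p; simp
  simp only [e3, e4, Finset.singleton_ne_empty, if_false, Finset.sum_const_zero, add_zero]

lemma my_num_singleton {N : ℕ} (hN : 2 ≤ N) (m1 m2 : Finset (Fin N) → ℝ)
    (h1 : mySupp m1) (h2 : mySupp m2) (n : Fin N) :
    (∑ B : Finset (Fin N), ∑ C : Finset (Fin N), if B ∩ C = {n} then m1 B * m2 C else 0) =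
      m1 {n} * m2 {n} + m1 {n} * m2 Finset.univ + m1 Finset.univ * m2 {n} := by
  haveI : Nonempty (Fin N) := ⟨⟨0, by omega⟩⟩
  rw [my_sum_eq_supp hN _ (by
    intro A hA1 hA2
    apply Finset.sum_eq_zero
    intro C _
    rw [h1 A hA1 hA2]; simp)]
  have hinner : ∀ B : Finset (Fin N),
      (∑ C : Finset (Fin N), if B ∩ C = {n} then m1 B * m2 C else 0) =
      (∑ p : Fin N, if B ∩ {p} = {n} then m1 B * m2 {p} else 0) +
      (if B ∩ Finset.univ = {n} then m1 B * m2 Finset.univ else 0) := by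
    intro B
    exact my_sum_eq_supp hN _ (by intro C hC1 hC2; rw [h2 C hC1 hC2]; simp)
  simp only [hinner]
  have key : ∀ j p : Fin N, ((({j} : Finset (Fin N)) ∩ {p} = {n}) ↔ (j = n ∧ p = n)) := by
    intro j p
    constructor
    · intro hEq
      by_cases hjp : j = p
      · subst hjp
        simp at hEq
        exact ⟨hEq, hEq⟩
      · rw [Finset.singleton_inter_of_notMem (by simpa using fun hh => hjp hh)] at hEq
        exact absurd hEq.symm (Finset.singleton_ne_empty n)
    · rintro ⟨rfl, rfl⟩; simp
  have e1 : ∀ j : Fin N, ({j} : Finset (Fin N)) ∩ Finset.univ = {j} := by intro j; simp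
  have e4 : ∀ p : Fin N, (Finset.univ : Finset (Fin N)) ∩ {p} = {p} := by intro p; simp
  have e2 : (Finset.univ : Finset (Fin N)) ∩ Finset.univ = Finset.univ := by simp
  have e5 : (Finset.univ : Finset (Fin N)) ≠ {n} := my_univ_ne_singleton hN n
  have esing : ∀ j : Fin N, (({j} : Finset (Fin N)) = {n}) ↔ j = n := by
    intro j
    exact ⟨fun hh => Finset.singleton_injective hh, fun hh => by rw [hh]⟩
  simp only [key, e1, e4, e2, e5, esing, if_false, ite_and, add_zero]
  have hflat : ∀ x : Fin N,
      (∑ y : Fin N, if x = n then if y = n then m1 {x} * m2 {y} else 0 else 0) =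
      (if x = n then m1 {x} * m2 {n} else 0) := by
    intro x
    by_cases hx : x = n <;> simp [hx]
  simp only [hflat, ← ite_add_ite, add_zero]
  rw [Finset.sum_add_distrib]
  simp only [Finset.sum_ite_eq', Finset.mem_univ, if_true]

lemma my_num_univ {N : ℕ} (hN : 2 ≤ N) (m1 m2 : Finset (Fin N) → ℝ)
    (h1 : mySupp m1) (h2 : mySupp m2) :
    (∑ B : Finset (Fin N), ∑ C : Finset (Fin N),
        if B ∩ C = Finset.univ then m1 B * m2 C else 0) =
      m1 Finset.univ * m2 Finset.univ := by
  haveI : Nonempty (Fin N) := ⟨⟨0, by omega⟩⟩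
  rw [my_sum_eq_supp hN _ (by
    intro A hA1 hA2
    apply Finset.sum_eq_zero
    intro C _
    rw [h1 A hA1 hA2]; simp)]
  have hinner : ∀ B : Finset (Fin N),
      (∑ C : Finset (Fin N), if B ∩ C = Finset.univ then m1 B * m2 C else 0) =
      (∑ p : Fin N, if B ∩ {p} = Finset.univ then m1 B * m2 {p} else 0) +
      (if B ∩ Finset.univ = Finset.univ then m1 B * m2 Finset.univ else 0) := by
    intro B
    exact my_sum_eq_supp hN _ (by intro C hC1 hC2; rw [h2 C hC1 hC2]; simp)
  simp only [hinner]
  have hs : ∀ A : Finset (Fin N), ∀ p : Fin N, A ∩ {p} ≠ Finset.univ := by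
    intro A p hEq
    have : (A ∩ {p}).card ≤ 1 := le_trans (Finset.card_le_card Finset.inter_subset_right) (by simp)
    rw [hEq, Finset.card_univ] at this
    simp at this; omega
  have e1 : ∀ j : Fin N, ({j} : Finset (Fin N)) ∩ Finset.univ = {j} := by intro j; simp
  have e2 : (Finset.univ : Finset (Fin N)) ∩ Finset.univ = Finset.univ := by simp
  simp only [hs, e1, e2, if_false, if_true,
    fun j : Fin N => (my_univ_ne_singleton hN j).symm, Finset.sum_const_zero, add_zero, zero_add]

lemma my_supp_dempster {N : ℕ} (hN : 2 ≤ N) (m1 m2 : Finset (Fin N) → ℝ)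
    (h1 : mySupp m1) (h2 : mySupp m2) : mySupp (dempster m1 m2) := by
  intro A hA1 hA2
  unfold dempster
  by_cases hAe : A = ∅
  · simp [hAe]
  rw [if_neg hAe]
  have : (∑ B : Finset (Fin N), ∑ C : Finset (Fin N),
      if B ∩ C = A then m1 B * m2 C else 0) = 0 := by
    apply Finset.sum_eq_zero
    intro B _
    apply Finset.sum_eq_zero
    intro C _
    by_cases hBC : B ∩ C = A
    · rw [if_pos hBC]
      by_cases hB : m1 B = 0
      · rw [hB]; ring
      by_cases hC : m2 C = 0
      · rw [hC]; ring
      -- B and C are singletons or univ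
      exfalso
      have hBcase : (∃ j, B = ({j} : Finset (Fin N))) ∨ B = Finset.univ := by
        by_contra hcon
        push_neg at hcon
        exact hB (h1 B (fun j hj => hcon.1 j hj) hcon.2)
      have hCcase : (∃ p, C = ({p} : Finset (Fin N))) ∨ C = Finset.univ := by
        by_contra hcon
        push_neg at hcon
        exact hC (h2 C (fun p hp => hcon.1 p hp) hcon.2)
      rcases hBcase with ⟨j, rfl⟩ | rfl <;> rcases hCcase with ⟨p, rfl⟩ | rfl
      · by_cases hjp : j = p
        · subst hjp; simp at hBC; exact hA1 j hBC.symm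
        · rw [Finset.singleton_inter_of_notMem (by simpa using fun hh => hjp hh)] at hBC
          exact hAe hBC.symm
      · rw [Finset.inter_univ] at hBC; exact hA1 j hBC.symm
      · rw [Finset.univ_inter] at hBC; exact hA1 p hBC.symm
      · rw [Finset.univ_inter] at hBC; exact hA2 hBC.symm
    · rw [if_neg hBC]
  rw [this]
  simp


lemma my_d_supp {N : ℕ} (hN : 2 ≤ N) (wj : ℝ) (βj : Fin N → ℝ) :
    mySupp (rdiscount wj (assessBBA βj)) := by
  intro A hA1 hA2
  unfold rdiscount assessBBA
  rw [if_neg hA2, if_neg hA2]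
  rw [Finset.sum_eq_zero (fun n _ => if_neg (hA1 n))]
  ring

lemma my_d_singleton {N : ℕ} (hN : 2 ≤ N) (wj : ℝ) (βj : Fin N → ℝ) (n : Fin N) :
    rdiscount wj (assessBBA βj) {n} = wj * βj n := by
  unfold rdiscount assessBBA
  have h1 : ({n} : Finset (Fin N)) ≠ Finset.univ :=
    fun hh => my_univ_ne_singleton hN n hh.symm
  rw [if_neg h1, if_neg h1]
  congr 1
  have : ∀ m : Fin N, (({n} : Finset (Fin N)) = {m}) ↔ n = m :=
    fun m => ⟨fun hh => Finset.singleton_injective hh, fun hh => by rw [hh]⟩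
  simp only [this]
  simp [Finset.sum_ite_eq]

lemma my_d_univ {N : ℕ} (hN : 2 ≤ N) (wj : ℝ) (βj : Fin N → ℝ) :
    rdiscount wj (assessBBA βj) Finset.univ = 1 - wj * ∑ n, βj n := by
  simp [rdiscount, assessBBA]
  ring

/-- Theorem 1: the original ER algorithm follows the reliability
discounting and combination scheme. -/
theorem originalER_eq_reliability_scheme (N L : ℕ) (hN : 2 ≤ N) (hL : 1 ≤ L)
    (β : ℕ → Fin N → ℝ) (w : ℕ → ℝ)
    (hβ : ∀ i < L, ∀ n, 0 ≤ β i n) (hβsum : ∀ i < L, ∑ n, β i n ≤ 1)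
    (hw : ∀ i < L, 0 ≤ w i ∧ w i ≤ 1)
    -- the reliability-discounted assessment BBAs
    (d : ℕ → Finset (Fin N) → ℝ)
    (hd : ∀ j, d j = rdiscount (w j) (assessBBA (β j)))
    -- the masses of the original ER recursion
    (b : ℕ → Fin N → ℝ) (hb : ∀ j n, b j n = w j * β j n)
    (h : ℕ → ℝ) (hh : ∀ j, h j = 1 - w j * ∑ n, β j n)
    -- at every step the conflict is strictly less than 1
    (hconf : ∀ i, i + 1 < L → conflict (combUpTo d i) (d (i + 1)) < 1) :
    ∀ i < L,
      (∀ n : Fin N, (erSeq b h i).1 n = combUpTo d i {n}) ∧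
      (erSeq b h i).2 = combUpTo d i Finset.univ := by
  haveI : Nonempty (Fin N) := ⟨⟨0, by omega⟩⟩
  have hdsupp : ∀ j, mySupp (d j) := by
    intro j; rw [hd j]; exact my_d_supp hN _ _
  have hdsing : ∀ j n, d j {n} = b j n := by
    intro j n; rw [hd j, my_d_singleton hN, hb]
  have hduniv : ∀ j, d j Finset.univ = h j := by
    intro j; rw [hd j, my_d_univ hN, hh]
  have main : ∀ i, mySupp (combUpTo d i) ∧
      (∀ n : Fin N, (erSeq b h i).1 n = combUpTo d i {n}) ∧
      (erSeq b h i).2 = combUpTo d i Finset.univ := by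
    intro i
    induction i with
    | zero =>
      refine ⟨hdsupp 0, ?_, ?_⟩
      · intro n
        show b 0 n = d 0 {n}
        rw [hdsing]
      · show h 0 = d 0 Finset.univ
        rw [hduniv]
    | succ i ih =>
      obtain ⟨hs, hsing, huniv⟩ := ih
      have hs2 := hdsupp (i + 1)
      have hcomb : combUpTo d (i + 1) = dempster (combUpTo d i) (d (i + 1)) := rfl
      have hconfEq : conflict (combUpTo d i) (d (i + 1)) =
          ∑ j : Fin N, ∑ p : Fin N,
            if p ≠ j then (erSeq b h i).1 j * b (i + 1) p else 0 := by
        rw [my_conflict_eq hN _ _ hs hs2]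
        congr 1; ext j; congr 1; ext p
        rw [hsing j, hdsing]
      refine ⟨?_, ?_, ?_⟩
      · rw [hcomb]; exact my_supp_dempster hN _ _ hs hs2
      · intro n
        show (erStep (erSeq b h i) (b (i + 1)) (h (i + 1))).1 n =
          dempster (combUpTo d i) (d (i + 1)) {n}
        unfold erStep dempster
        rw [if_neg (Finset.singleton_ne_empty n)]
        rw [my_num_singleton hN _ _ hs hs2, div_eq_inv_mul, hconfEq]
        simp only [hsing n, hdsing, hduniv, huniv] <;> ring
      · show (erStep (erSeq b h i) (b (i + 1)) (h (i + 1))).2 =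
          dempster (combUpTo d i) (d (i + 1)) Finset.univ
        unfold erStep dempster
        rw [if_neg Finset.univ_nonempty.ne_empty]
        rw [my_num_univ hN _ _ hs hs2, div_eq_inv_mul, hconfEq]
        simp only [hduniv, huniv]
  intro i _
  exact (main i).2
end

section
/- Dempster's rule of combination is associative: if m1, m2, m3 are BBAs on a finite nonempty frame Θ such that c(m1,m2) < 1, c(m1⊕m2, m3) < 1, c(m2,m3) < 1, and c(m1, m2⊕m3) < 1, then (m1 ⊕ m2) ⊕ m3 = m1 ⊕ (m2 ⊕ m3). -/
open Finset

/-!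
Dempster's rule is the normalization of the unnormalized conjunctive combination, and the
latter is associative: both bracketings put mass `m1 X * m2 Y * m3 Z` on `X ∩ Y ∩ Z`.
Normalizing an intermediate combination only deletes its mass `κ` on `∅` and rescales the rest
by `(1 - κ)⁻¹`; combining with a mass function of total mass one turns this into a change of the
mass on `∅` and the same rescaling, both of which the outer normalization undoes.
-/

section Conjunctive

variable {Θ : Type*} [Fintype Θ] [DecidableEq Θ]

def conjunctive (m1 m2 : Finset Θ → ℝ) (A : Finset Θ) : ℝ :=
  ∑ B : Finset Θ, ∑ C : Finset Θ, if B ∩ C = A then m1 B * m2 C else 0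

noncomputable def normalized (m : Finset Θ → ℝ) (A : Finset Θ) : ℝ :=
  if A = ∅ then 0 else m A / (1 - m ∅)

theorem dempster_eq_normalized_conjunctive (m1 m2 : Finset Θ → ℝ) :
    dempster m1 m2 = normalized (conjunctive m1 m2) := rfl

theorem conjunctive_comm (m1 m2 : Finset Θ → ℝ) : conjunctive m1 m2 = conjunctive m2 m1 := by
  ext A
  rw [conjunctive, sum_comm]
  simp only [conjunctive, Finset.inter_comm, mul_comm]

theorem sum_conjunctive_mul (m1 m2 φ : Finset Θ → ℝ) :
    ∑ A, conjunctive m1 m2 A * φ A = ∑ B, ∑ C, m1 B * m2 C * φ (B ∩ C) := by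
  simp only [conjunctive, sum_mul, ite_mul, zero_mul]
  rw [sum_comm]
  refine sum_congr rfl fun B _ => ?_
  rw [sum_comm]
  simp

theorem conjunctive_assoc (m1 m2 m3 : Finset Θ → ℝ) :
    conjunctive (conjunctive m1 m2) m3 = conjunctive m1 (conjunctive m2 m3) := by
  ext A
  have lhs : conjunctive (conjunctive m1 m2) m3 A =
      ∑ Z, ∑ X, ∑ Y, m1 X * m2 Y * (if X ∩ Y ∩ Z = A then m3 Z else 0) := by
    rw [conjunctive, sum_comm]
    refine sum_congr rfl fun Z _ => ?_
    simp_rw [← mul_ite_zero, sum_conjunctive_mul]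
  have rhs : conjunctive m1 (conjunctive m2 m3) A =
      ∑ X, m1 X * ∑ Y, ∑ Z, m2 Y * m3 Z * (if X ∩ (Y ∩ Z) = A then 1 else 0) := by
    rw [conjunctive]
    refine sum_congr rfl fun X _ => ?_
    rw [← sum_conjunctive_mul (φ := fun C => if X ∩ C = A then 1 else 0), mul_sum]
    refine sum_congr rfl fun C _ => ?_
    rw [mul_boole, mul_ite_zero]
  rw [lhs, rhs, sum_comm]
  refine sum_congr rfl fun X _ => ?_
  rw [sum_comm, mul_sum]
  refine sum_congr rfl fun Y _ => ?_
  rw [mul_sum]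
  refine sum_congr rfl fun Z _ => ?_
  rw [Finset.inter_assoc]
  split_ifs <;> ring

theorem conjunctive_normalized_left (f g : Finset Θ → ℝ) (hg : ∑ C, g C = 1) (A : Finset Θ) :
    conjunctive (normalized f) g A =
      (conjunctive f g A - if A = ∅ then f ∅ else 0) / (1 - f ∅) := by
  have hnorm : normalized f = fun B => (f B - if B = ∅ then f ∅ else 0) / (1 - f ∅) := by
    ext B
    by_cases hB : B = ∅ <;> simp [normalized, hB]
  have hsplit : ∀ B C, (if B ∩ C = A then (f B - if B = ∅ then f ∅ else 0) / (1 - f ∅) * g C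
      else 0) = ((if B ∩ C = A then f B * g C else 0) -
        if B ∩ C = A then (if B = ∅ then f ∅ else 0) * g C else 0) / (1 - f ∅) := by
    intro B C
    split_ifs <;> ring
  have hempty : ∑ B, ∑ C, (if B ∩ C = A then (if B = ∅ then f ∅ else 0) * g C else 0) =
      if A = ∅ then f ∅ else 0 := by
    rw [Fintype.sum_eq_single ∅ fun B hB => by simp [hB]]
    by_cases hA : A = ∅
    · simp [hA, ← mul_sum, hg]
    · simp [hA, Ne.symm hA]
  simp only [conjunctive, hnorm, hsplit, ← sum_div, sum_sub_distrib, hempty]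

theorem normalized_conjunctive_normalized_left {f g : Finset Θ → ℝ} (hf : f ∅ ≠ 1)
    (hg : ∑ C, g C = 1) :
    normalized (conjunctive (normalized f) g) = normalized (conjunctive f g) := by
  ext A
  by_cases hA : A = ∅
  · simp [normalized, hA]
  have hk : 1 - f ∅ ≠ 0 := sub_ne_zero.mpr hf.symm
  have h0 : 1 - conjunctive (normalized f) g ∅ = (1 - conjunctive f g ∅) / (1 - f ∅) := by
    rw [conjunctive_normalized_left f g hg, if_pos rfl]
    field_simp
    ring
  rw [normalized, if_neg hA, h0, conjunctive_normalized_left f g hg, if_neg hA, sub_zero,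
    div_div_div_cancel_right₀ hk, normalized, if_neg hA]

theorem normalized_conjunctive_normalized_right {f g : Finset Θ → ℝ} (hf : ∑ B, f B = 1)
    (hg : g ∅ ≠ 1) :
    normalized (conjunctive f (normalized g)) = normalized (conjunctive f g) := by
  rw [conjunctive_comm, normalized_conjunctive_normalized_left hg hf, conjunctive_comm]

end Conjunctive

theorem dempster_assoc_general {Θ : Type*} [Fintype Θ] [DecidableEq Θ]
    (m1 m2 m3 : Finset Θ → ℝ) (h1 : IsBBA m1) (h3 : IsBBA m3)
    (hc12 : conflict m1 m2 < 1) (hc23 : conflict m2 m3 < 1) :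
    dempster (dempster m1 m2) m3 = dempster m1 (dempster m2 m3) := by
  calc dempster (dempster m1 m2) m3
      = normalized (conjunctive (conjunctive m1 m2) m3) :=
        normalized_conjunctive_normalized_left hc12.ne h3.2.2
    _ = normalized (conjunctive m1 (conjunctive m2 m3)) := by rw [conjunctive_assoc]
    _ = dempster m1 (dempster m2 m3) :=
        (normalized_conjunctive_normalized_right h1.2.2 hc23.ne).symm

/-- Dempster's rule of combination is associative. -/
theorem dempster_assoc {Θ : Type*} [Fintype Θ] [DecidableEq Θ] [Nonempty Θ]
    (m1 m2 m3 : Finset Θ → ℝ) (h1 : IsBBA m1) (h2 : IsBBA m2) (h3 : IsBBA m3)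
    (hc12 : conflict m1 m2 < 1) (hc12_3 : conflict (dempster m1 m2) m3 < 1)
    (hc23 : conflict m2 m3 < 1) (hc1_23 : conflict m1 (dempster m2 m3) < 1) :
    dempster (dempster m1 m2) m3 = dempster m1 (dempster m2 m3) :=
  dempster_assoc_general m1 m2 m3 h1 h3 hc12 hc23
end

section
/- The extended Dempster's rule of combination yields an IBBA: if (m1, ω1) and (m2, ω2) are IBBAs on a finite nonempty frame Θ whose conflict c = Σ_{B∩C=∅} m1(B)·m2(C) is strictly less than 1, then the extended Dempster combination (m12, ω12), defined by m12(∅) = 0, m12(A) = K·(Σ_{B∩C=A} m1(B)·m2(C) + m1(A)·ω2 + ω1·m2(A)) for nonempty A, and ω12 = K·ω1·ω2 with K = (1 − c)^{-1}, is again an IBBA. -/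
open Finset

/-! Expanding the product `(∑ m1 + ω1) * (∑ m2 + ω2) = 1` term by term, with `Ω` acting as the
identity for intersection, yields exactly the unnormalised masses of all nonempty `A`, of `Ω`,
and the conflict `c` (the mass landing on `∅`). Discarding `c` and rescaling by `(1 - c)⁻¹`
therefore gives total mass `1`. -/

namespace Finset

variable {ι κ γ M : Type*} [Fintype ι] [Fintype κ] [Fintype γ] [DecidableEq γ]

theorem sum_sum_sum_ite_eq [AddCommMonoid M] (φ : ι → κ → γ) (f : ι → κ → M) :
    ∑ a, ∑ i, ∑ j, (if φ i j = a then f i j else 0) = ∑ i, ∑ j, f i j := by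
  rw [sum_comm]
  refine sum_congr rfl fun i _ => ?_
  rw [sum_comm]
  simp only [sum_ite_eq, mem_univ, if_true]

theorem sum_ite_eq_zero_eq_sum_sub [AddCommGroup M] (a : γ) (g : γ → M) :
    ∑ x, (if x = a then 0 else g x) = ∑ x, g x - g a := by
  rw [eq_sub_iff_add_eq, ← Fintype.sum_ite_eq' a g, ← sum_add_distrib]
  exact sum_congr rfl fun x _ => by split_ifs <;> simp

end Finset

section

variable {Θ : Type*} [Fintype Θ] [DecidableEq Θ]

theorem sum_sum_ite_inter_eq_mul (m1 m2 : Finset Θ → ℝ) :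
    ∑ A : Finset Θ, ∑ B : Finset Θ, ∑ C : Finset Θ,
      (if B ∩ C = A then m1 B * m2 C else 0) = (∑ B, m1 B) * ∑ C, m2 C := by
  rw [sum_sum_sum_ite_eq (· ∩ ·) fun B C => m1 B * m2 C, sum_mul_sum]

theorem edComb_fst_empty (p q : (Finset Θ → ℝ) × ℝ) : (edComb p q).1 ∅ = 0 := by
  simp [edComb]

theorem edComb_fst_nonneg {m1 m2 : Finset Θ → ℝ} {ω1 ω2 : ℝ} (hm1 : ∀ A, 0 ≤ m1 A)
    (hm2 : ∀ A, 0 ≤ m2 A) (hω1 : 0 ≤ ω1) (hω2 : 0 ≤ ω2) (hc : conflict m1 m2 ≤ 1)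
    (A : Finset Θ) : 0 ≤ (edComb (m1, ω1) (m2, ω2)).1 A := by
  have hK : 0 ≤ (1 - conflict m1 m2)⁻¹ := inv_nonneg.mpr (sub_nonneg.mpr hc)
  have hsum : 0 ≤ ∑ B : Finset Θ, ∑ C : Finset Θ, if B ∩ C = A then m1 B * m2 C else 0 :=
    sum_nonneg fun B _ => sum_nonneg fun C _ => by
      split_ifs
      exacts [mul_nonneg (hm1 B) (hm2 C), le_rfl]
  dsimp only [edComb]
  split_ifs
  · exact le_rfl
  · exact mul_nonneg hK
      (add_nonneg (add_nonneg hsum (mul_nonneg (hm1 A) hω2)) (mul_nonneg hω1 (hm2 A)))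

theorem edComb_snd_nonneg {m1 m2 : Finset Θ → ℝ} {ω1 ω2 : ℝ} (hω1 : 0 ≤ ω1) (hω2 : 0 ≤ ω2)
    (hc : conflict m1 m2 ≤ 1) : 0 ≤ (edComb (m1, ω1) (m2, ω2)).2 :=
  mul_nonneg (inv_nonneg.mpr (sub_nonneg.mpr hc)) (mul_nonneg hω1 hω2)

theorem sum_edComb_fst {m1 m2 : Finset Θ → ℝ} (hm1 : m1 ∅ = 0) (hm2 : m2 ∅ = 0) (ω1 ω2 : ℝ) :
    ∑ A, (edComb (m1, ω1) (m2, ω2)).1 A = (1 - conflict m1 m2)⁻¹ *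
      ((∑ B, m1 B) * (∑ C, m2 C) - conflict m1 m2 + (∑ B, m1 B) * ω2 + ω1 * ∑ C, m2 C) := by
  dsimp only [edComb]
  rw [sum_ite_eq_zero_eq_sum_sub, ← mul_sum, ← mul_sub, sum_add_distrib, sum_add_distrib,
    sum_sum_ite_inter_eq_mul, ← sum_mul, ← mul_sum, hm1, hm2]
  congr 1
  simp only [conflict]
  ring

end

theorem edComb_isIBBA_general {Θ : Type*} [Fintype Θ] [DecidableEq Θ]
    (m1 : Finset Θ → ℝ) (ω1 : ℝ) (m2 : Finset Θ → ℝ) (ω2 : ℝ)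
    (h1 : IsIBBA m1 ω1) (h2 : IsIBBA m2 ω2) (hc : conflict m1 m2 < 1) :
    IsIBBA (edComb (m1, ω1) (m2, ω2)).1 (edComb (m1, ω1) (m2, ω2)).2 := by
  obtain ⟨hm1, hm1_nonneg, hω1, hsum1⟩ := h1
  obtain ⟨hm2, hm2_nonneg, hω2, hsum2⟩ := h2
  refine ⟨edComb_fst_empty _ _, edComb_fst_nonneg hm1_nonneg hm2_nonneg hω1 hω2 hc.le,
    edComb_snd_nonneg hω1 hω2 hc.le, ?_⟩
  rw [sum_edComb_fst hm1 hm2, eq_sub_of_add_eq hsum1, eq_sub_of_add_eq hsum2]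
  have hK : 1 - conflict m1 m2 ≠ 0 := (sub_pos.mpr hc).ne'
  dsimp only [edComb]
  field_simp
  ring

/-- the extended Dempster's rule of combination yields an IBBA. -/
theorem edComb_isIBBA {Θ : Type*} [Fintype Θ] [DecidableEq Θ] [Nonempty Θ]
    (m1 : Finset Θ → ℝ) (ω1 : ℝ) (m2 : Finset Θ → ℝ) (ω2 : ℝ)
    (h1 : IsIBBA m1 ω1) (h2 : IsIBBA m2 ω2) (hc : conflict m1 m2 < 1) :
    IsIBBA (edComb (m1, ω1) (m2, ω2)).1 (edComb (m1, ω1) (m2, ω2)).2 :=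
  edComb_isIBBA_general m1 ω1 m2 ω2 h1 h2 hc
end

section
/- For simple-structure IBBAs, the extended Dempster's rule reduces exactly to the aggregation step of the modified ER algorithm: let H = {H_1,…,H_N} with N ≥ 2 and let (m1, ω1), (m2, ω2) be IBBAs on H whose focal elements are singletons or the whole frame H. If the singleton conflict c = Σ_{j≠p} m1({H_j})·m2({H_p}) < 1, then the overall conflict Σ_{B∩C=∅} m1(B)·m2(C) equals c, and the extended Dempster combination (m12, ω12) satisfies m12({H_n}) = K·[m1({H_n})·m2({H_n}) + m1({H_n})·(m2(H) + ω2) + (m1(H) + ω1)·m2({H_n})] for each n, m12(H) = K·[m1(H)·m2(H) + m1(H)·ω2 + ω1·m2(H)], ω12 = K·ω1·ω2 with K = (1 − c)^{-1}, and m12(A) = 0 for every subset A that is neither a singleton nor H. -/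
open Finset

private lemma sum_supp_aux {N : ℕ} (hN : 2 ≤ N) (m : Finset (Fin N) → ℝ)
    (hs : ∀ A : Finset (Fin N), (∀ n : Fin N, A ≠ {n}) → A ≠ Finset.univ → m A = 0)
    (f : Finset (Fin N) → ℝ) :
    ∑ B : Finset (Fin N), m B * f B =
      m Finset.univ * f Finset.univ + ∑ n : Fin N, m {n} * f {n} := by
  have huniv : (Finset.univ : Finset (Fin N)) ∉
      Finset.univ.image (fun n : Fin N => ({n} : Finset (Fin N))) := by
    simp only [mem_image, mem_univ, true_and]
    rintro ⟨n, h⟩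
    have := congrArg Finset.card h
    simp [Finset.card_univ] at this
    omega
  rw [← Finset.sum_subset (Finset.subset_univ
      (insert Finset.univ (Finset.univ.image fun n : Fin N => ({n} : Finset (Fin N)))))]
  · rw [Finset.sum_insert huniv, Finset.sum_image
      (fun a _ b _ h => Finset.singleton_injective h)]
  · intro B _ hB
    simp only [mem_insert, mem_image, mem_univ, true_and, not_or, not_exists] at hB
    rw [hs B (fun n h => hB.2 n h.symm) hB.1, zero_mul]

/-- for simple-structure IBBAs, the extended Dempster's rule reduces
exactly to the aggregation step of the modified ER algorithm. -/
theorem edComb_simple_structure (N : ℕ) (hN : 2 ≤ N)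
    (m1 : Finset (Fin N) → ℝ) (ω1 : ℝ) (m2 : Finset (Fin N) → ℝ) (ω2 : ℝ)
    (h1 : IsIBBA m1 ω1) (h2 : IsIBBA m2 ω2)
    (hs1 : ∀ A : Finset (Fin N), (∀ n : Fin N, A ≠ {n}) → A ≠ Finset.univ → m1 A = 0)
    (hs2 : ∀ A : Finset (Fin N), (∀ n : Fin N, A ≠ {n}) → A ≠ Finset.univ → m2 A = 0)
    (hc : singConflict m1 m2 < 1) :
    conflict m1 m2 = singConflict m1 m2 ∧
    (∀ n : Fin N, (edComb (m1, ω1) (m2, ω2)).1 {n} = (1 - singConflict m1 m2)⁻¹ *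
      (m1 {n} * m2 {n} + m1 {n} * (m2 Finset.univ + ω2) +
        (m1 Finset.univ + ω1) * m2 {n})) ∧
    (edComb (m1, ω1) (m2, ω2)).1 Finset.univ = (1 - singConflict m1 m2)⁻¹ *
      (m1 Finset.univ * m2 Finset.univ + m1 Finset.univ * ω2 + ω1 * m2 Finset.univ) ∧
    (edComb (m1, ω1) (m2, ω2)).2 = (1 - singConflict m1 m2)⁻¹ * (ω1 * ω2) ∧
    (∀ A : Finset (Fin N), (∀ n : Fin N, A ≠ {n}) → A ≠ Finset.univ →
      (edComb (m1, ω1) (m2, ω2)).1 A = 0) := by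
  obtain ⟨hm1e, hm1p, hw1p, hm1s⟩ := h1
  obtain ⟨hm2e, hm2p, hw2p, hm2s⟩ := h2
  have hNE : Nonempty (Fin N) := ⟨⟨0, by omega⟩⟩
  have huns : ∀ n : Fin N, (Finset.univ : Finset (Fin N)) ≠ {n} := by
    intro n h
    have := congrArg Finset.card h
    simp [Finset.card_univ] at this
    omega
  have hune : (Finset.univ : Finset (Fin N)) ≠ ∅ := by
    simp [Finset.univ_eq_empty_iff, not_isEmpty_of_nonempty]
  have hsing : ∀ j p : Fin N, ({j} : Finset (Fin N)) ∩ {p} =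
      if j = p then ({j} : Finset (Fin N)) else ∅ := by
    intro j p
    split
    · next h => subst h; simp
    · next h => exact Finset.singleton_inter_of_notMem (by simpa using h)
  have key : ∀ A : Finset (Fin N),
      (∑ B : Finset (Fin N), ∑ C : Finset (Fin N), if B ∩ C = A then m1 B * m2 C else 0) =
      (if (Finset.univ : Finset (Fin N)) = A then m1 Finset.univ * m2 Finset.univ else 0)
      + (∑ p : Fin N, if ({p} : Finset (Fin N)) = A then m1 Finset.univ * m2 {p} else 0)
      + ∑ j : Fin N, ((if ({j} : Finset (Fin N)) = A then m1 {j} * m2 Finset.univ else 0)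
          + ∑ p : Fin N, if (if j = p then ({j} : Finset (Fin N)) else ∅) = A
              then m1 {j} * m2 {p} else 0) := by
    intro A
    have inner : ∀ B : Finset (Fin N),
        (∑ C : Finset (Fin N), if B ∩ C = A then m1 B * m2 C else 0) =
        m1 B * ((if B ∩ Finset.univ = A then m2 Finset.univ else 0)
          + ∑ p : Fin N, if B ∩ {p} = A then m2 {p} else 0) := by
      intro B
      have : (∑ C : Finset (Fin N), if B ∩ C = A then m1 B * m2 C else 0) =
          ∑ C : Finset (Fin N), m2 C * (if B ∩ C = A then m1 B else 0) := by
        refine Finset.sum_congr rfl fun C _ => ?_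
        split <;> ring
      rw [this, sum_supp_aux hN m2 hs2]
      simp only [mul_add, Finset.mul_sum]
      congr 1
      · split <;> ring
      · refine Finset.sum_congr rfl fun p _ => ?_
        split <;> ring
    calc (∑ B : Finset (Fin N), ∑ C : Finset (Fin N), if B ∩ C = A then m1 B * m2 C else 0)
        = ∑ B : Finset (Fin N), m1 B * ((if B ∩ Finset.univ = A then m2 Finset.univ else 0)
            + ∑ p : Fin N, if B ∩ {p} = A then m2 {p} else 0) :=
          Finset.sum_congr rfl fun B _ => inner B
      _ = _ := by
          rw [sum_supp_aux hN m1 hs1]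
          simp only [Finset.univ_inter, Finset.inter_univ, hsing, mul_add, Finset.mul_sum,
            mul_ite, mul_zero, add_assoc]
  have hconf : conflict m1 m2 = singConflict m1 m2 := by
    rw [conflict, key ∅, singConflict]
    have h1' : ((Finset.univ : Finset (Fin N)) = ∅) = False := by simp [hune]
    simp only [h1', if_false, Finset.singleton_ne_empty, if_neg (Finset.singleton_ne_empty _)]
    rw [Finset.sum_const_zero]
    simp only [zero_add]
    refine Finset.sum_congr rfl fun j _ => ?_
    refine Finset.sum_congr rfl fun p _ => ?_
    by_cases h : j = p <;> simp [h, Ne.symm]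
  refine ⟨hconf, ?_, ?_, ?_, ?_⟩
  · intro n
    simp only [edComb, hconf, if_neg (Finset.singleton_ne_empty n)]
    rw [key {n}]
    rw [if_neg (huns n)]
    have h2' : (∑ p : Fin N, if ({p} : Finset (Fin N)) = {n}
        then m1 Finset.univ * m2 {p} else 0) = m1 Finset.univ * m2 {n} := by
      rw [Finset.sum_eq_single n]
      · simp
      · intro p _ hp; rw [if_neg (by simpa [Finset.singleton_inj] using hp)]
      · simp
    have h3' : (∑ j : Fin N, ((if ({j} : Finset (Fin N)) = {n} then m1 {j} * m2 Finset.univ else 0)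
          + ∑ p : Fin N, if (if j = p then ({j} : Finset (Fin N)) else ∅) = {n}
              then m1 {j} * m2 {p} else 0)) =
        m1 {n} * m2 Finset.univ + m1 {n} * m2 {n} := by
      rw [Finset.sum_eq_single n]
      · rw [if_pos rfl]
        congr 1
        rw [Finset.sum_eq_single n]
        · simp
        · intro p _ hp
          rw [if_neg (show ¬ n = p from Ne.symm hp), if_neg (Ne.symm (Finset.singleton_ne_empty n))]
        · simp
      · intro j _ hj
        rw [if_neg (by simpa [Finset.singleton_inj] using hj), zero_add]
        apply Finset.sum_eq_zero
        intro p _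
        rcases eq_or_ne j p with h | h
        · subst h
          rw [if_pos rfl, if_neg (by simpa [Finset.singleton_inj] using hj)]
        · rw [if_neg h, if_neg (Ne.symm (Finset.singleton_ne_empty n))]
      · simp
    rw [h2', h3']
    ring
  · simp only [edComb, hconf, if_neg hune]
    rw [key Finset.univ, if_pos rfl]
    have h2' : (∑ p : Fin N, if ({p} : Finset (Fin N)) = Finset.univ
        then m1 Finset.univ * m2 {p} else 0) = 0 := by
      apply Finset.sum_eq_zero
      intro p _
      rw [if_neg (fun h => huns p h.symm)]
    have h3' : (∑ j : Fin N, ((if ({j} : Finset (Fin N)) = Finset.univ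
          then m1 {j} * m2 Finset.univ else 0)
          + ∑ p : Fin N, if (if j = p then ({j} : Finset (Fin N)) else ∅) = Finset.univ
              then m1 {j} * m2 {p} else 0)) = 0 := by
      apply Finset.sum_eq_zero
      intro j _
      rw [if_neg (fun h => huns j h.symm), zero_add]
      apply Finset.sum_eq_zero
      intro p _
      rcases eq_or_ne j p with h | h
      · subst h
        rw [if_pos rfl, if_neg (fun h' => huns j h'.symm)]
      · rw [if_neg h, if_neg (Ne.symm hune)]
    rw [h2', h3']
    ring
  · simp [edComb, hconf]
  · intro A hA1 hA2
    by_cases hA0 : A = ∅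
    · simp [edComb, hA0]
    · simp only [edComb, hconf, if_neg hA0]
      rw [key A, if_neg (fun h => hA2 h.symm)]
      have h2' : (∑ p : Fin N, if ({p} : Finset (Fin N)) = A
          then m1 Finset.univ * m2 {p} else 0) = 0 := by
        apply Finset.sum_eq_zero
        intro p _
        rw [if_neg (fun h => hA1 p h.symm)]
      have h3' : (∑ j : Fin N, ((if ({j} : Finset (Fin N)) = A then m1 {j} * m2 Finset.univ else 0)
            + ∑ p : Fin N, if (if j = p then ({j} : Finset (Fin N)) else ∅) = A
                then m1 {j} * m2 {p} else 0)) = 0 := by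
        apply Finset.sum_eq_zero
        intro j _
        rw [if_neg (fun h => hA1 j h.symm), zero_add]
        apply Finset.sum_eq_zero
        intro p _
        rcases eq_or_ne j p with h | h
        · subst h
          rw [if_pos rfl, if_neg (fun h' => hA1 j h'.symm)]
        · rw [if_neg h, if_neg (fun h' => hA0 h'.symm)]
      rw [h2', h3', hs1 A hA1 hA2, hs2 A hA1 hA2]
      ring
end

section
/- The extended Dempster's rule of combination is associative: if (m1,ω1), (m2,ω2), (m3,ω3) are IBBAs on a finite nonempty frame Θ such that all the conflicts c((m1,ω1),(m2,ω2)), c((m1,ω1)⊕(m2,ω2), (m3,ω3)), c((m2,ω2),(m3,ω3)), and c((m1,ω1), (m2,ω2)⊕(m3,ω3)) are strictly less than 1, then ((m1,ω1) ⊕ (m2,ω2)) ⊕ (m3,ω3) = (m1,ω1) ⊕ ((m2,ω2) ⊕ (m3,ω3)). -/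
open Finset

section EdCombAssocHelpers
variable {Θ : Type*} [Fintype Θ] [DecidableEq Θ]

/-- The unnormalized extended-Dempster combination mass. -/
noncomputable def edN (m1 m2 : Finset Θ → ℝ) (ω1 ω2 : ℝ) (A : Finset Θ) : ℝ :=
  (∑ B : Finset Θ, ∑ C : Finset Θ, if B ∩ C = A then m1 B * m2 C else 0) + m1 A * ω2 + ω1 * m2 A

lemma edKey (f g h : Finset Θ → ℝ) (A : Finset Θ) :
    (∑ B : Finset Θ, ∑ C : Finset Θ, if B ∩ C = A then
       (∑ D : Finset Θ, ∑ E : Finset Θ, if D ∩ E = B then f D * g E else 0) * h C else 0)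
    = ∑ D : Finset Θ, ∑ E : Finset Θ, ∑ C : Finset Θ,
       if D ∩ E ∩ C = A then f D * g E * h C else 0 := by
  have step : ∀ B C : Finset Θ, (if B ∩ C = A then
       (∑ D : Finset Θ, ∑ E : Finset Θ, if D ∩ E = B then f D * g E else 0) * h C else 0)
      = ∑ D : Finset Θ, ∑ E : Finset Θ,
          if D ∩ E = B ∧ B ∩ C = A then f D * g E * h C else 0 := by
    intro B C
    split_ifs with hBC
    · rw [Finset.sum_mul]
      refine Finset.sum_congr rfl fun D _ => ?_
      rw [Finset.sum_mul]
      refine Finset.sum_congr rfl fun E _ => ?_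
      simp [hBC, ite_mul, mul_assoc]
    · simp [hBC]
  have collapse : ∀ D E C : Finset Θ,
      (∑ B : Finset Θ, if D ∩ E = B ∧ B ∩ C = A then f D * g E * h C else 0)
      = if D ∩ E ∩ C = A then f D * g E * h C else 0 := by
    intro D E C
    rw [Finset.sum_eq_single (D ∩ E)]
    · simp
    · intro b _ hb
      simp [Ne.symm hb]
    · simp
  simp only [step]
  calc (∑ B : Finset Θ, ∑ C : Finset Θ, ∑ D : Finset Θ, ∑ E : Finset Θ,
          if D ∩ E = B ∧ B ∩ C = A then f D * g E * h C else 0)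
      = ∑ B : Finset Θ, ∑ D : Finset Θ, ∑ C : Finset Θ, ∑ E : Finset Θ,
          if D ∩ E = B ∧ B ∩ C = A then f D * g E * h C else 0 :=
        Finset.sum_congr rfl fun B _ => Finset.sum_comm
    _ = ∑ D : Finset Θ, ∑ B : Finset Θ, ∑ C : Finset Θ, ∑ E : Finset Θ,
          if D ∩ E = B ∧ B ∩ C = A then f D * g E * h C else 0 := Finset.sum_comm
    _ = ∑ D : Finset Θ, ∑ B : Finset Θ, ∑ E : Finset Θ, ∑ C : Finset Θ,
          if D ∩ E = B ∧ B ∩ C = A then f D * g E * h C else 0 :=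
        Finset.sum_congr rfl fun D _ => Finset.sum_congr rfl fun B _ => Finset.sum_comm
    _ = ∑ D : Finset Θ, ∑ E : Finset Θ, ∑ B : Finset Θ, ∑ C : Finset Θ,
          if D ∩ E = B ∧ B ∩ C = A then f D * g E * h C else 0 :=
        Finset.sum_congr rfl fun D _ => Finset.sum_comm
    _ = ∑ D : Finset Θ, ∑ E : Finset Θ, ∑ C : Finset Θ, ∑ B : Finset Θ,
          if D ∩ E = B ∧ B ∩ C = A then f D * g E * h C else 0 :=
        Finset.sum_congr rfl fun D _ => Finset.sum_congr rfl fun E _ => Finset.sum_comm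
    _ = _ := Finset.sum_congr rfl fun D _ => Finset.sum_congr rfl fun E _ =>
          Finset.sum_congr rfl fun C _ => collapse D E C

lemma edExpandL (m1 m2 m3 : Finset Θ → ℝ) (ω1 ω2 : ℝ) (A : Finset Θ) :
    (∑ B : Finset Θ, ∑ C : Finset Θ, if B ∩ C = A then edN m1 m2 ω1 ω2 B * m3 C else 0)
    = (∑ D : Finset Θ, ∑ E : Finset Θ, ∑ C : Finset Θ,
        if D ∩ E ∩ C = A then m1 D * m2 E * m3 C else 0)
      + ω2 * (∑ B : Finset Θ, ∑ C : Finset Θ, if B ∩ C = A then m1 B * m3 C else 0)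
      + ω1 * (∑ B : Finset Θ, ∑ C : Finset Θ, if B ∩ C = A then m2 B * m3 C else 0) := by
  have split : ∀ B C : Finset Θ,
      (if B ∩ C = A then edN m1 m2 ω1 ω2 B * m3 C else 0)
      = (if B ∩ C = A then
          (∑ D : Finset Θ, ∑ E : Finset Θ, if D ∩ E = B then m1 D * m2 E else 0) * m3 C else 0)
        + ω2 * (if B ∩ C = A then m1 B * m3 C else 0)
        + ω1 * (if B ∩ C = A then m2 B * m3 C else 0) := by
    intro B C
    unfold edN
    split_ifs <;> ring
  simp only [split, Finset.sum_add_distrib, ← Finset.mul_sum]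
  rw [edKey]

lemma edExpandR (m1 m2 m3 : Finset Θ → ℝ) (ω2 ω3 : ℝ) (A : Finset Θ) :
    (∑ B : Finset Θ, ∑ C : Finset Θ, if B ∩ C = A then m1 B * edN m2 m3 ω2 ω3 C else 0)
    = (∑ D : Finset Θ, ∑ E : Finset Θ, ∑ C : Finset Θ,
        if D ∩ E ∩ C = A then m1 D * m2 E * m3 C else 0)
      + ω3 * (∑ B : Finset Θ, ∑ C : Finset Θ, if B ∩ C = A then m1 B * m2 C else 0)
      + ω2 * (∑ B : Finset Θ, ∑ C : Finset Θ, if B ∩ C = A then m1 B * m3 C else 0) := by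
  have step : ∀ B C : Finset Θ, (if B ∩ C = A then
       m1 B * (∑ D : Finset Θ, ∑ E : Finset Θ, if D ∩ E = C then m2 D * m3 E else 0) else 0)
      = ∑ D : Finset Θ, ∑ E : Finset Θ,
          if D ∩ E = C ∧ B ∩ C = A then m1 B * m2 D * m3 E else 0 := by
    intro B C
    split_ifs with hBC
    · rw [Finset.mul_sum]
      refine Finset.sum_congr rfl fun D _ => ?_
      rw [Finset.mul_sum]
      refine Finset.sum_congr rfl fun E _ => ?_
      simp [hBC, mul_ite, mul_assoc]
    · simp [hBC]
  have collapse : ∀ B D E : Finset Θ,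
      (∑ C : Finset Θ, if D ∩ E = C ∧ B ∩ C = A then m1 B * m2 D * m3 E else 0)
      = if B ∩ D ∩ E = A then m1 B * m2 D * m3 E else 0 := by
    intro B D E
    rw [Finset.sum_eq_single (D ∩ E)]
    · simp [Finset.inter_assoc]
    · intro b _ hb
      simp [Ne.symm hb]
    · simp
  have split : ∀ B C : Finset Θ,
      (if B ∩ C = A then m1 B * edN m2 m3 ω2 ω3 C else 0)
      = (if B ∩ C = A then
          m1 B * (∑ D : Finset Θ, ∑ E : Finset Θ, if D ∩ E = C then m2 D * m3 E else 0) else 0)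
        + ω3 * (if B ∩ C = A then m1 B * m2 C else 0)
        + ω2 * (if B ∩ C = A then m1 B * m3 C else 0) := by
    intro B C
    unfold edN
    split_ifs <;> ring
  simp only [split, Finset.sum_add_distrib, ← Finset.mul_sum]
  congr 2
  simp only [step]
  calc (∑ B : Finset Θ, ∑ C : Finset Θ, ∑ D : Finset Θ, ∑ E : Finset Θ,
          if D ∩ E = C ∧ B ∩ C = A then m1 B * m2 D * m3 E else 0)
      = ∑ B : Finset Θ, ∑ D : Finset Θ, ∑ C : Finset Θ, ∑ E : Finset Θ,
          if D ∩ E = C ∧ B ∩ C = A then m1 B * m2 D * m3 E else 0 :=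
        Finset.sum_congr rfl fun B _ => Finset.sum_comm
    _ = ∑ B : Finset Θ, ∑ D : Finset Θ, ∑ E : Finset Θ, ∑ C : Finset Θ,
          if D ∩ E = C ∧ B ∩ C = A then m1 B * m2 D * m3 E else 0 :=
        Finset.sum_congr rfl fun B _ => Finset.sum_congr rfl fun D _ => Finset.sum_comm
    _ = _ := Finset.sum_congr rfl fun B _ => Finset.sum_congr rfl fun D _ =>
          Finset.sum_congr rfl fun E _ => collapse B D E

lemma edComb_fst_eq (p q : (Finset Θ → ℝ) × ℝ) (B : Finset Θ) :
    (edComb p q).1 B = (1 - conflict p.1 q.1)⁻¹ *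
      (edN p.1 q.1 p.2 q.2 B - if B = ∅ then edN p.1 q.1 p.2 q.2 ∅ else 0) := by
  by_cases hB : B = ∅
  · simp [edComb, hB]
  · simp only [edComb, if_neg hB, edN]
    ring

lemma conflict_edComb_left (p q : (Finset Θ → ℝ) × ℝ) (m3 : Finset Θ → ℝ) :
    conflict (edComb p q).1 m3 = (1 - conflict p.1 q.1)⁻¹ *
      ((∑ B : Finset Θ, ∑ C : Finset Θ,
          if B ∩ C = ∅ then edN p.1 q.1 p.2 q.2 B * m3 C else 0)
        - edN p.1 q.1 p.2 q.2 ∅ * ∑ C : Finset Θ, m3 C) := by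
  have expand : ∀ B C : Finset Θ,
      (if B ∩ C = ∅ then (edComb p q).1 B * m3 C else 0)
      = (1 - conflict p.1 q.1)⁻¹ *
          ((if B ∩ C = ∅ then edN p.1 q.1 p.2 q.2 B * m3 C else 0)
            - (if B = ∅ ∧ B ∩ C = ∅ then edN p.1 q.1 p.2 q.2 ∅ * m3 C else 0)) := by
    intro B C
    rw [edComb_fst_eq]
    by_cases hB : B = ∅ <;> by_cases hP : B ∩ C = ∅ <;> simp [hB, hP] <;> ring
  show (∑ B : Finset Θ, ∑ C : Finset Θ, if B ∩ C = ∅ then (edComb p q).1 B * m3 C else 0) = _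
  simp only [expand, ← Finset.mul_sum]
  congr 1
  simp only [Finset.sum_sub_distrib]
  congr 1
  rw [Finset.sum_eq_single (∅ : Finset Θ)]
  · simp [Finset.mul_sum]
  · intro b _ hb
    simp [hb]
  · simp

lemma edComb_snd_eq (p q : (Finset Θ → ℝ) × ℝ) :
    (edComb p q).2 = (1 - conflict p.1 q.1)⁻¹ * (p.2 * q.2) := rfl

lemma edN_empty_eq (m1 m2 : Finset Θ → ℝ) (ω1 ω2 : ℝ) (hm1 : m1 ∅ = 0) (hm2 : m2 ∅ = 0) :
    edN m1 m2 ω1 ω2 ∅ = conflict m1 m2 := by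
  simp [edN, conflict, hm1, hm2]

lemma conflict_edComb_right (m1 : Finset Θ → ℝ) (q r : (Finset Θ → ℝ) × ℝ) :
    conflict m1 (edComb q r).1 = (1 - conflict q.1 r.1)⁻¹ *
      ((∑ B : Finset Θ, ∑ C : Finset Θ,
          if B ∩ C = ∅ then m1 B * edN q.1 r.1 q.2 r.2 C else 0)
        - (∑ B : Finset Θ, m1 B) * edN q.1 r.1 q.2 r.2 ∅) := by
  have expand : ∀ B C : Finset Θ,
      (if B ∩ C = ∅ then m1 B * (edComb q r).1 C else 0)
      = (1 - conflict q.1 r.1)⁻¹ *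
          ((if B ∩ C = ∅ then m1 B * edN q.1 r.1 q.2 r.2 C else 0)
            - (if C = ∅ ∧ B ∩ C = ∅ then m1 B * edN q.1 r.1 q.2 r.2 ∅ else 0)) := by
    intro B C
    rw [edComb_fst_eq]
    by_cases hC : C = ∅ <;> by_cases hP : B ∩ C = ∅ <;> simp [hC, hP] <;> ring
  show (∑ B : Finset Θ, ∑ C : Finset Θ, if B ∩ C = ∅ then m1 B * (edComb q r).1 C else 0) = _
  simp only [expand, ← Finset.mul_sum]
  congr 1
  simp only [Finset.sum_sub_distrib]
  congr 1
  rw [Finset.sum_mul]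
  refine Finset.sum_congr rfl fun B _ => ?_
  rw [Finset.sum_eq_single (∅ : Finset Θ)]
  · simp
  · intro b _ hb
    simp [hb]
  · simp

lemma num_left (p q : (Finset Θ → ℝ) × ℝ) (m3 : Finset Θ → ℝ) (A : Finset Θ) (hA : A ≠ ∅) :
    (∑ B : Finset Θ, ∑ C : Finset Θ, if B ∩ C = A then (edComb p q).1 B * m3 C else 0)
    = (1 - conflict p.1 q.1)⁻¹ *
        (∑ B : Finset Θ, ∑ C : Finset Θ,
          if B ∩ C = A then edN p.1 q.1 p.2 q.2 B * m3 C else 0) := by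
  have expand : ∀ B C : Finset Θ,
      (if B ∩ C = A then (edComb p q).1 B * m3 C else 0)
      = (1 - conflict p.1 q.1)⁻¹ *
          (if B ∩ C = A then edN p.1 q.1 p.2 q.2 B * m3 C else 0) := by
    intro B C
    rw [edComb_fst_eq]
    by_cases hP : B ∩ C = A
    · have hB : B ≠ ∅ := by
        intro hB
        exact hA (by simp [hB] at hP; exact hP.symm)
      simp [hP, hB]
      ring
    · simp [hP]
  simp only [expand, ← Finset.mul_sum]

lemma num_right (m1 : Finset Θ → ℝ) (q r : (Finset Θ → ℝ) × ℝ) (A : Finset Θ) (hA : A ≠ ∅) :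
    (∑ B : Finset Θ, ∑ C : Finset Θ, if B ∩ C = A then m1 B * (edComb q r).1 C else 0)
    = (1 - conflict q.1 r.1)⁻¹ *
        (∑ B : Finset Θ, ∑ C : Finset Θ,
          if B ∩ C = A then m1 B * edN q.1 r.1 q.2 r.2 C else 0) := by
  have expand : ∀ B C : Finset Θ,
      (if B ∩ C = A then m1 B * (edComb q r).1 C else 0)
      = (1 - conflict q.1 r.1)⁻¹ *
          (if B ∩ C = A then m1 B * edN q.1 r.1 q.2 r.2 C else 0) := by
    intro B C
    rw [edComb_fst_eq]
    by_cases hP : B ∩ C = A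
    · have hC : C ≠ ∅ := by
        intro hC
        exact hA (by simp [hC] at hP; exact hP.symm)
      simp [hP, hC]
      ring
    · simp [hP]
  simp only [expand, ← Finset.mul_sum]


lemma edComb_fst_ne (p q : (Finset Θ → ℝ) × ℝ) (A : Finset Θ) (hA : A ≠ ∅) :
    (edComb p q).1 A = (1 - conflict p.1 q.1)⁻¹ *
      ((∑ B : Finset Θ, ∑ C : Finset Θ, if B ∩ C = A then p.1 B * q.1 C else 0)
        + p.1 A * q.2 + p.2 * q.1 A) := by
  simp [edComb, hA]

end EdCombAssocHelpers

/-- the extended Dempster's rule of combination is associative. -/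
theorem edComb_assoc {Θ : Type*} [Fintype Θ] [DecidableEq Θ] [Nonempty Θ]
    (p1 p2 p3 : (Finset Θ → ℝ) × ℝ)
    (h1 : IsIBBA p1.1 p1.2) (h2 : IsIBBA p2.1 p2.2) (h3 : IsIBBA p3.1 p3.2)
    (hc12 : conflict p1.1 p2.1 < 1) (hc12_3 : conflict (edComb p1 p2).1 p3.1 < 1)
    (hc23 : conflict p2.1 p3.1 < 1) (hc1_23 : conflict p1.1 (edComb p2 p3).1 < 1) :
    edComb (edComb p1 p2) p3 = edComb p1 (edComb p2 p3) := by
  obtain ⟨h1e, h1n, h1w, h1s⟩ := h1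
  obtain ⟨h2e, h2n, h2w, h2s⟩ := h2
  obtain ⟨h3e, h3n, h3w, h3s⟩ := h3
  have hd12 : (0:ℝ) < 1 - conflict p1.1 p2.1 := by linarith
  have hd23 : (0:ℝ) < 1 - conflict p2.1 p3.1 := by linarith
  have hm1sum : (∑ B : Finset Θ, p1.1 B) = 1 - p1.2 := by linarith
  have hm3sum : (∑ C : Finset Θ, p3.1 C) = 1 - p3.2 := by linarith
  have hc23eq : (∑ B : Finset Θ, ∑ C : Finset Θ,
      if B ∩ C = ∅ then p2.1 B * p3.1 C else 0) = conflict p2.1 p3.1 := rfl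
  have hc12eq : (∑ B : Finset Θ, ∑ C : Finset Θ,
      if B ∩ C = ∅ then p1.1 B * p2.1 C else 0) = conflict p1.1 p2.1 := rfl
  set SS : ℝ := 1 - (∑ D : Finset Θ, ∑ E : Finset Θ, ∑ C : Finset Θ,
      if D ∩ E ∩ C = ∅ then p1.1 D * p2.1 E * p3.1 C else 0)
    - p1.2 * conflict p2.1 p3.1
    - p2.2 * (∑ B : Finset Θ, ∑ C : Finset Θ, if B ∩ C = ∅ then p1.1 B * p3.1 C else 0)
    - p3.2 * conflict p1.1 p2.1 with hSSdef
  have hL1 : 1 - conflict (edComb p1 p2).1 p3.1 = (1 - conflict p1.1 p2.1)⁻¹ * SS := by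
    rw [conflict_edComb_left, edExpandL, edN_empty_eq _ _ _ _ h1e h2e, hm3sum, hc23eq, hSSdef]
    field_simp
    ring
  have hR1 : 1 - conflict p1.1 (edComb p2 p3).1 = (1 - conflict p2.1 p3.1)⁻¹ * SS := by
    rw [conflict_edComb_right, edExpandR, edN_empty_eq _ _ _ _ h2e h3e, hm1sum, hc12eq, hSSdef]
    field_simp
    ring
  have hSS : 0 < SS := by
    have h0 : (0:ℝ) < (1 - conflict p1.1 p2.1)⁻¹ * SS := by rw [← hL1]; linarith
    have h := mul_pos hd12 h0
    rwa [← mul_assoc, mul_inv_cancel₀ hd12.ne', one_mul] at h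
  rw [Prod.ext_iff]
  refine ⟨funext fun A => ?_, ?_⟩
  · by_cases hA : A = ∅
    · simp [edComb, hA]
    · rw [edComb_fst_ne (edComb p1 p2) p3 A hA, edComb_fst_ne p1 (edComb p2 p3) A hA,
          num_left p1 p2 p3.1 A hA, num_right p1.1 p2 p3 A hA, hL1, hR1,
          edComb_fst_eq p1 p2 A, edComb_fst_eq p2 p3 A,
          edComb_snd_eq, edComb_snd_eq, edExpandL, edExpandR]
      simp only [if_neg hA, sub_zero, edN]
      field_simp
      ring
  · rw [edComb_snd_eq, edComb_snd_eq, edComb_snd_eq, edComb_snd_eq, hL1, hR1]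
    field_simp
end

section
/- The original ER algorithm (equivalently, the reliability discounting and combination scheme) violates the consensus axiom: let H = {H_1,…,H_N} with N ≥ 2, fix a grade k, and suppose all L assessments are precisely assessed to grade H_k (β_{k,i} = 1 and β_{n,i} = 0 for n ≠ k, for every i), with weights w_i ∈ [0,1]. Then the Dempster combination of the reliability-discounted assessment BBAs m_1^{w_1} ⊕ ⋯ ⊕ m_L^{w_L} is well defined (all conflicts are 0) and assigns mass ∏_{i=1}^L (1 − w_i) to H and 1 − ∏_{i=1}^L (1 − w_i) to {H_k}; in particular, if every w_i < 1 then the combined mass on H is strictly positive, so the general attribute is not precisely assessed to H_k. -/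
open Finset

/-!
Discounting the precise assessment to `H_k` by `w` gives the simple support function with mass
`w` on `{H_k}` and `1 - w` on the whole frame. Focal sets of two simple support functions with the
same nonempty focus intersect in that focus or in the frame, never in `∅`, so Dempster's rule
meets no conflict and just multiplies the masses left on the frame: after `L` steps that mass is
`∏ (1 - w_i)`, positive as soon as every `w_i < 1`.
-/

def simpleSupport {Θ : Type*} [Fintype Θ] [DecidableEq Θ] (S : Finset Θ) (u : ℝ) :
    Finset Θ → ℝ :=
  fun A => if A = univ then u else if A = S then 1 - u else 0

section SimpleSupport

variable {Θ : Type*} [Fintype Θ] [DecidableEq Θ] {S : Finset Θ}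

theorem sum_simpleSupport_mul (hS : S ≠ univ) (u : ℝ) (f : Finset Θ → ℝ) :
    ∑ A, simpleSupport S u A * f A = u * f univ + (1 - u) * f S := by
  rw [Fintype.sum_eq_add univ S hS.symm fun A hA => by simp [simpleSupport, hA.1, hA.2]]
  simp [simpleSupport, hS]

theorem sum_sum_simpleSupport_inter (hS : S ≠ univ) (u v : ℝ) (P : Finset Θ → Prop)
    [DecidablePred P] :
    ∑ B, ∑ C, (if P (B ∩ C) then simpleSupport S u B * simpleSupport S v C else 0) =
      (if P univ then u * v else 0) + if P S then 1 - u * v else 0 := by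
  have hmul : ∀ B C, (if P (B ∩ C) then simpleSupport S u B * simpleSupport S v C else 0) =
      simpleSupport S u B * (simpleSupport S v C * if P (B ∩ C) then 1 else 0) := by
    intro B C
    split_ifs <;> ring
  simp only [hmul, ← mul_sum, sum_simpleSupport_mul hS, univ_inter, inter_univ, inter_self]
  split_ifs <;> ring

theorem conflict_simpleSupport (hS : S ≠ univ) (hS₀ : S.Nonempty) (u v : ℝ) :
    conflict (simpleSupport S u) (simpleSupport S v) = 0 := by
  rw [conflict, sum_sum_simpleSupport_inter hS u v (· = ∅)]
  simp [hS₀.ne_empty, (hS₀.mono (subset_univ S)).ne_empty]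

theorem dempster_simpleSupport (hS : S ≠ univ) (hS₀ : S.Nonempty) (u v : ℝ) :
    dempster (simpleSupport S u) (simpleSupport S v) = simpleSupport S (u * v) := by
  have hS_ne := hS₀.ne_empty
  have huniv_ne := (hS₀.mono (subset_univ S)).ne_empty
  funext A
  rw [dempster, conflict_simpleSupport hS hS₀, sum_sum_simpleSupport_inter hS u v (· = A)]
  by_cases hA : A = ∅
  · subst hA
    simp [simpleSupport, huniv_ne.symm, hS_ne.symm]
  by_cases hAu : A = univ
  · subst hAu
    simp [simpleSupport, huniv_ne, hS]
  by_cases hAS : A = S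
  · subst hAS
    simp [simpleSupport, hA, hAu, Ne.symm hAu]
  · simp [simpleSupport, hA, hAu, hAS, Ne.symm hAu, Ne.symm hAS]

theorem rdiscount_simpleSupport (α u : ℝ) :
    rdiscount α (simpleSupport S u) = simpleSupport S (α * u + (1 - α)) := by
  funext A
  by_cases hAu : A = univ
  · simp [rdiscount, simpleSupport, hAu]
  by_cases hAS : A = S
  · subst hAS
    simp only [rdiscount, simpleSupport, hAu, if_false, if_true]
    ring
  · simp [rdiscount, simpleSupport, hAu, hAS]

theorem combUpTo_simpleSupport (hS : S ≠ univ) (hS₀ : S.Nonempty) {d : ℕ → Finset Θ → ℝ}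
    {u : ℕ → ℝ} (hd : ∀ j, d j = simpleSupport S (u j)) (i : ℕ) :
    combUpTo d i = simpleSupport S (∏ j ∈ range (i + 1), u j) := by
  induction i with
  | zero => simp [combUpTo, hd 0]
  | succ i ih => rw [combUpTo, ih, hd (i + 1), dempster_simpleSupport hS hS₀, ← prod_range_succ]

end SimpleSupport

theorem assessBBA_precise {N : ℕ} (k : Fin N) :
    assessBBA (fun n => if n = k then (1 : ℝ) else 0) = simpleSupport {k} 0 := by
  funext A
  by_cases hAu : A = univ
  · simp [assessBBA, simpleSupport, hAu]
  by_cases hAk : A = {k}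
  · subst hAk
    simp [assessBBA, simpleSupport, hAu, singleton_inj]
  · simp only [assessBBA, simpleSupport, hAu, hAk, if_false]
    refine sum_eq_zero fun n _ => ?_
    split_ifs with hAn hnk
    · exact absurd (hnk ▸ hAn) hAk
    all_goals rfl

theorem originalER_violates_consensus_general (N L : ℕ) (hN : 2 ≤ N) (hL : 1 ≤ L)
    (k : Fin N) (w : ℕ → ℝ)
    -- the reliability-discounted assessment BBAs of the precise assessments to H_k
    (d : ℕ → Finset (Fin N) → ℝ)
    (hd : ∀ j, d j = rdiscount (w j)
      (assessBBA (fun n => if n = k then (1 : ℝ) else 0))) :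
    (∀ i, i + 1 < L → conflict (combUpTo d i) (d (i + 1)) = 0) ∧
    combUpTo d (L - 1) Finset.univ = ∏ i ∈ Finset.range L, (1 - w i) ∧
    combUpTo d (L - 1) {k} = 1 - ∏ i ∈ Finset.range L, (1 - w i) ∧
    ((∀ i < L, w i < 1) → 0 < combUpTo d (L - 1) Finset.univ) := by
  have : Nontrivial (Fin N) := Fin.nontrivial_iff_two_le.mpr hN
  have hk := singleton_ne_univ k
  have hd_simple : ∀ j, d j = simpleSupport {k} (1 - w j) := fun j => by
    rw [hd, assessBBA_precise, rdiscount_simpleSupport, mul_zero, zero_add]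
  have hcomb := combUpTo_simpleSupport hk (singleton_nonempty k) hd_simple
  have hfinal : combUpTo d (L - 1) = simpleSupport {k} (∏ i ∈ range L, (1 - w i)) := by
    rw [hcomb, Nat.sub_add_cancel hL]
  refine ⟨fun i _ => ?_, by simp [hfinal, simpleSupport], by simp [hfinal, simpleSupport, hk],
    fun hw => ?_⟩
  · rw [hcomb, hd_simple]
    exact conflict_simpleSupport hk (singleton_nonempty k) _ _
  · simp only [hfinal, simpleSupport, if_true]
    exact prod_pos fun i hi => sub_pos.mpr (hw i (mem_range.mp hi))

/-- the original ER algorithm (the reliability discounting and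
combination scheme) violates the consensus axiom. -/
theorem originalER_violates_consensus (N L : ℕ) (hN : 2 ≤ N) (hL : 1 ≤ L)
    (k : Fin N) (w : ℕ → ℝ) (hw : ∀ i < L, 0 ≤ w i ∧ w i ≤ 1)
    -- the reliability-discounted assessment BBAs of the precise assessments to H_k
    (d : ℕ → Finset (Fin N) → ℝ)
    (hd : ∀ j, d j = rdiscount (w j)
      (assessBBA (fun n => if n = k then (1 : ℝ) else 0))) :
    (∀ i, i + 1 < L → conflict (combUpTo d i) (d (i + 1)) = 0) ∧
    combUpTo d (L - 1) Finset.univ = ∏ i ∈ Finset.range L, (1 - w i) ∧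
    combUpTo d (L - 1) {k} = 1 - ∏ i ∈ Finset.range L, (1 - w i) ∧
    ((∀ i < L, w i < 1) → 0 < combUpTo d (L - 1) Finset.univ) :=
  originalER_violates_consensus_general N L hN hL k w d hd
end

section
/- The original ER algorithm satisfies the independence axiom: let H = {H_1,…,H_N} with N ≥ 2, and let m_1^{w_1}, …, m_L^{w_L} be the reliability-discounted assessment BBAs of L assessments with belief degrees β_{n,i} ≥ 0, Σ_n β_{n,i} ≤ 1, and weights w_i ∈ [0,1]. Fix a grade n_0 and suppose β_{n_0,i} = 0 for every i. If at every step of the iterated Dempster combination the conflict is strictly less than 1, then the combined BBA m_1^{w_1} ⊕ ⋯ ⊕ m_L^{w_L} assigns mass 0 to the singleton {H_{n_0}}. -/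
open Finset

/-!
The masses of every `d j` live on `Θ` and on singletons `{k}` with `k ≠ n₀`. This family of
focal sets is closed under nonempty intersection, so Dempster's rule never creates mass outside
it: a product `m₁ B · m₂ C` can reach `A = B ∩ C` only if `B` and `C` are both focal. Hence the
iterated combination also vanishes at `{n₀}`, which is not in the family because `N ≥ 2`.
-/

section FocalFamily

variable {Θ : Type*} [Fintype Θ]

def univAndSingletons (S : Set Θ) : Set (Finset Θ) :=
  insert univ ((fun k => {k}) '' S)

theorem univ_mem_univAndSingletons (S : Set Θ) : univ ∈ univAndSingletons S :=
  Set.mem_insert _ _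

theorem singleton_mem_univAndSingletons {S : Set Θ} {k : Θ} (hk : k ∈ S) :
    {k} ∈ univAndSingletons S :=
  Set.mem_insert_of_mem _ ⟨k, hk, rfl⟩

variable [DecidableEq Θ]

theorem inter_mem_univAndSingletons (S : Set Θ) :
    ∀ B ∈ univAndSingletons S, ∀ C ∈ univAndSingletons S, B ∩ C ≠ ∅ →
      B ∩ C ∈ univAndSingletons S := by
  rintro B (rfl | ⟨j, hj, rfl⟩) C (rfl | ⟨k, hk, rfl⟩) hBC
  · rw [inter_self]
    exact univ_mem_univAndSingletons S
  · rw [univ_inter]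
    exact singleton_mem_univAndSingletons hk
  · rw [inter_univ]
    exact singleton_mem_univAndSingletons hj
  · obtain rfl : j = k := by
      by_contra hjk
      exact hBC (singleton_inter_of_notMem (notMem_singleton.2 hjk))
    rw [inter_self]
    exact singleton_mem_univAndSingletons hj

theorem dempster_eq_zero_of_notMem {F : Set (Finset Θ)}
    (hF : ∀ B ∈ F, ∀ C ∈ F, B ∩ C ≠ ∅ → B ∩ C ∈ F) {m₁ m₂ : Finset Θ → ℝ}
    (h₁ : ∀ A ∉ F, m₁ A = 0) (h₂ : ∀ A ∉ F, m₂ A = 0) {A : Finset Θ} (hA : A ∉ F) :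
    dempster m₁ m₂ A = 0 := by
  unfold dempster
  split_ifs with hA₀
  · rfl
  refine div_eq_zero_iff.2 (Or.inl (sum_eq_zero fun B _ => sum_eq_zero fun C _ => ?_))
  split_ifs with hBC
  · subst hBC
    by_cases hB : B ∈ F
    · by_cases hC : C ∈ F
      · exact absurd (hF B hB C hC hA₀) hA
      · rw [h₂ C hC, mul_zero]
    · rw [h₁ B hB, zero_mul]
  · rfl

theorem combUpTo_eq_zero_of_notMem {F : Set (Finset Θ)}
    (hF : ∀ B ∈ F, ∀ C ∈ F, B ∩ C ≠ ∅ → B ∩ C ∈ F) {d : ℕ → Finset Θ → ℝ} {i : ℕ}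
    (hd : ∀ j ≤ i, ∀ A ∉ F, d j A = 0) : ∀ A ∉ F, combUpTo d i A = 0 := by
  induction i with
  | zero => exact hd 0 le_rfl
  | succ i ih =>
    exact fun A hA => dempster_eq_zero_of_notMem hF (ih fun j hj => hd j (by omega))
      (hd (i + 1) le_rfl) hA

theorem rdiscount_eq_zero_of_notMem {F : Set (Finset Θ)} (hF : univ ∈ F) (α : ℝ)
    {m : Finset Θ → ℝ} (hm : ∀ A ∉ F, m A = 0) : ∀ A ∉ F, rdiscount α m A = 0 := by
  intro A hA
  rw [rdiscount, if_neg fun h : A = univ => hA (h ▸ hF), hm A hA, mul_zero]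

end FocalFamily

theorem assessBBA_eq_zero_of_notMem {N : ℕ} {β : Fin N → ℝ} {S : Set (Fin N)}
    (hS : ∀ k ∉ S, β k = 0) : ∀ A ∉ univAndSingletons S, assessBBA β A = 0 := by
  intro A hA
  rw [assessBBA, if_neg fun h : A = univ => hA (h ▸ univ_mem_univAndSingletons S)]
  refine sum_eq_zero fun k _ => ?_
  split_ifs with hAk
  · by_contra hk
    exact hA (hAk ▸ singleton_mem_univAndSingletons (by_contra fun hkS => hk (hS k hkS)))
  · rfl

theorem originalER_independence_general (N L : ℕ) (hN : 2 ≤ N) (hL : 1 ≤ L)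
    (β : ℕ → Fin N → ℝ) (w : ℕ → ℝ)
    (n0 : Fin N) (h0 : ∀ i < L, β i n0 = 0)
    (d : ℕ → Finset (Fin N) → ℝ)
    (hd : ∀ j, d j = rdiscount (w j) (assessBBA (β j))) :
    combUpTo d (L - 1) {n0} = 0 := by
  set F := univAndSingletons ({n0}ᶜ : Set (Fin N))
  have hdF : ∀ j ≤ L - 1, ∀ A ∉ F, d j A = 0 := fun j hj => by
    rw [hd]
    refine rdiscount_eq_zero_of_notMem (univ_mem_univAndSingletons _) _
      (assessBBA_eq_zero_of_notMem fun k hk => ?_)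
    rw [Set.mem_compl_singleton_iff, not_not] at hk
    exact hk ▸ h0 j (by omega)
  have hn0 : {n0} ∉ F := by
    rintro (hu | ⟨k, hk, hkn⟩)
    · have := congrArg card hu
      rw [card_singleton, card_univ, Fintype.card_fin] at this
      omega
    · exact hk (singleton_inj.1 hkn)
  exact combUpTo_eq_zero_of_notMem (inter_mem_univAndSingletons _) hdF _ hn0

/-- the original ER algorithm satisfies the independence axiom. -/
theorem originalER_independence (N L : ℕ) (hN : 2 ≤ N) (hL : 1 ≤ L)
    (β : ℕ → Fin N → ℝ) (w : ℕ → ℝ)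
    (hβ : ∀ i < L, ∀ n, 0 ≤ β i n) (hβsum : ∀ i < L, ∑ n, β i n ≤ 1)
    (hw : ∀ i < L, 0 ≤ w i ∧ w i ≤ 1)
    (n0 : Fin N) (h0 : ∀ i < L, β i n0 = 0)
    (d : ℕ → Finset (Fin N) → ℝ)
    (hd : ∀ j, d j = rdiscount (w j) (assessBBA (β j)))
    (hconf : ∀ i, i + 1 < L → conflict (combUpTo d i) (d (i + 1)) < 1) :
    combUpTo d (L - 1) {n0} = 0 :=
  originalER_independence_general N L hN hL β w n0 h0 d hd
end

section
/- The modified ER algorithm (equivalently, the importance discounting and combination scheme) satisfies the completeness axiom: let H = {H_1,…,H_N} with N ≥ 2, let S be a subset of the grades, and suppose every assessment is completely assessed to S, i.e. for every i, β_{n,i} = 0 for n ∉ S and Σ_{n∈S} β_{n,i} = 1, with normalized weights w_i ∈ [0,1] satisfying Σ_{i=1}^L w_i = 1. If at every step of the iterated extended Dempster combination of the importance-discounted IBBAs w_i ⊙ m_i the conflict is strictly less than 1 and the final Ω-mass is strictly less than 1, then after normalization the resulting belief degrees satisfy β_n = 0 for every n ∉ S, β_H = 0, and Σ_{n∈S}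 β_n = 1. -/
open Finset

private lemma singleton_ne_univ' {N : ℕ} (hN : 2 ≤ N) (n : Fin N) :
    ({n} : Finset (Fin N)) ≠ Finset.univ := by
  intro h
  have h1 : ({n} : Finset (Fin N)).card = (Finset.univ : Finset (Fin N)).card := by rw [h]
  simp at h1
  omega

private lemma edComb_inv {N : ℕ} (S : Finset (Fin N))
    (p q : (Finset (Fin N) → ℝ) × ℝ)
    (hp : ∀ A, A ∉ S.image (fun n => ({n} : Finset (Fin N))) → p.1 A = 0)
    (hq : ∀ A, A ∉ S.image (fun n => ({n} : Finset (Fin N))) → q.1 A = 0)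
    (hps : (∑ A, p.1 A) + p.2 = 1) (hqs : (∑ A, q.1 A) + q.2 = 1)
    (hc : conflict p.1 q.1 < 1) :
    (∀ A, A ∉ S.image (fun n => ({n} : Finset (Fin N))) → (edComb p q).1 A = 0) ∧
      (∑ A, (edComb p q).1 A) + (edComb p q).2 = 1 := by
  have hempty : (∅ : Finset (Fin N)) ∉ S.image (fun n => ({n} : Finset (Fin N))) := by
    simp
  have hKne : (1 : ℝ) - conflict p.1 q.1 ≠ 0 := by linarith
  have hsupp : ∀ A, A ∉ S.image (fun n => ({n} : Finset (Fin N))) →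
      (∑ B : Finset (Fin N), ∑ C : Finset (Fin N),
        if B ∩ C = A then p.1 B * q.1 C else 0) = 0 ∨ A = ∅ := by
    intro A hA
    by_cases hA0 : A = ∅
    · exact Or.inr hA0
    refine Or.inl ?_
    apply Finset.sum_eq_zero; intro B _
    apply Finset.sum_eq_zero; intro C _
    split_ifs with hBC
    · by_cases hB : p.1 B = 0
      · rw [hB]; ring
      by_cases hC : q.1 C = 0
      · rw [hC]; ring
      exfalso
      have hBmem : B ∈ S.image (fun n => ({n} : Finset (Fin N))) := by
        by_contra h; exact hB (hp B h)
      have hCmem : C ∈ S.image (fun n => ({n} : Finset (Fin N))) := by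
        by_contra h; exact hC (hq C h)
      obtain ⟨j, hj, hjB⟩ := Finset.mem_image.mp hBmem
      obtain ⟨k, hk, hkC⟩ := Finset.mem_image.mp hCmem
      subst hjB; subst hkC
      by_cases hjk : j = k
      · subst hjk
        rw [Finset.inter_self] at hBC
        exact hA (hBC ▸ Finset.mem_image.mpr ⟨j, hj, rfl⟩)
      · rw [Finset.singleton_inter_of_notMem (by simp [hjk])] at hBC
        exact hA0 hBC.symm
    · rfl
  constructor
  · intro A hA
    by_cases hA0 : A = ∅
    · simp [edComb, hA0]
    · simp only [edComb, if_neg hA0]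
      rw [hp A hA, hq A hA]
      rcases hsupp A hA with h | h
      · rw [h]; ring
      · exact absurd h hA0
  · -- total mass
    have hp0 : p.1 ∅ = 0 := hp ∅ hempty
    have hq0 : q.1 ∅ = 0 := hq ∅ hempty
    set c := conflict p.1 q.1 with hcdef
    set K := (1 - c)⁻¹ with hKdef
    have hT : ∀ A : Finset (Fin N), (edComb p q).1 A =
        K * ((∑ B : Finset (Fin N), ∑ C : Finset (Fin N),
            if B ∩ C = A then p.1 B * q.1 C else 0) + p.1 A * q.2 + p.2 * q.1 A)
          - (if A = ∅ then K * c else 0) := by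
      intro A
      by_cases hA0 : A = ∅
      · subst hA0
        have hcc : (∑ B : Finset (Fin N), ∑ C : Finset (Fin N),
            if B ∩ C = (∅ : Finset (Fin N)) then p.1 B * q.1 C else 0) = c := rfl
        simp [edComb, hp0, hq0, hcc, hKdef]
      · simp only [edComb, if_neg hA0, hKdef]
        ring
    have hsum1 : (∑ A : Finset (Fin N), (edComb p q).1 A) =
        K * ((∑ A : Finset (Fin N), ∑ B : Finset (Fin N), ∑ C : Finset (Fin N),
            if B ∩ C = A then p.1 B * q.1 C else 0)
          + (∑ A : Finset (Fin N), p.1 A) * q.2 + p.2 * (∑ A : Finset (Fin N), q.1 A))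
          - K * c := by
      rw [Finset.sum_congr rfl (fun A _ => hT A), Finset.sum_sub_distrib]
      congr 1
      · rw [← Finset.mul_sum]
        congr 1
        rw [Finset.sum_add_distrib, Finset.sum_add_distrib, Finset.sum_mul, Finset.mul_sum]
      · simp
    have hdbl : (∑ A : Finset (Fin N), ∑ B : Finset (Fin N), ∑ C : Finset (Fin N),
        if B ∩ C = A then p.1 B * q.1 C else 0)
        = (∑ B : Finset (Fin N), p.1 B) * (∑ C : Finset (Fin N), q.1 C) := by
      rw [Finset.sum_comm]
      have : ∀ B : Finset (Fin N), (∑ A : Finset (Fin N), ∑ C : Finset (Fin N),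
          if B ∩ C = A then p.1 B * q.1 C else 0)
          = ∑ C : Finset (Fin N), p.1 B * q.1 C := by
        intro B
        rw [Finset.sum_comm]
        apply Finset.sum_congr rfl
        intro C _
        simp [Finset.sum_ite_eq]
      rw [Finset.sum_congr rfl (fun B _ => this B), Finset.sum_mul]
      apply Finset.sum_congr rfl
      intro B _
      rw [Finset.mul_sum]
    have hE : (edComb p q).2 = K * (p.2 * q.2) := rfl
    rw [hsum1, hdbl, hE]
    have h1 : (∑ A : Finset (Fin N), p.1 A) = 1 - p.2 := by linarith
    have h2 : (∑ A : Finset (Fin N), q.1 A) = 1 - q.2 := by linarith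
    rw [h1, h2]
    have : K * (1 - c) = 1 := inv_mul_cancel₀ hKne
    nlinarith [this]

/-- the modified ER algorithm (the importance discounting and
combination scheme) satisfies the completeness axiom. -/
theorem modifiedER_completeness (N L : ℕ) (hN : 2 ≤ N) (hL : 1 ≤ L)
    (S : Finset (Fin N)) (β : ℕ → Fin N → ℝ) (w : ℕ → ℝ)
    (hβ : ∀ i < L, ∀ n, 0 ≤ β i n)
    -- every assessment is completely assessed to S
    (hβS : ∀ i < L, ∀ n ∉ S, β i n = 0) (hβsum : ∀ i < L, ∑ n ∈ S, β i n = 1)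
    (hw : ∀ i < L, 0 ≤ w i ∧ w i ≤ 1) (hwsum : ∑ i ∈ Finset.range L, w i = 1)
    (d : ℕ → (Finset (Fin N) → ℝ) × ℝ)
    (hd : ∀ j, d j = impDiscount (w j) (assessBBA (β j)))
    (hconf : ∀ i, i + 1 < L → conflict (edCombUpTo d i).1 (d (i + 1)).1 < 1)
    (hΩ : (edCombUpTo d (L - 1)).2 < 1) :
    (∀ n ∉ S, (edCombUpTo d (L - 1)).1 {n} / (1 - (edCombUpTo d (L - 1)).2) = 0) ∧
    (edCombUpTo d (L - 1)).1 Finset.univ / (1 - (edCombUpTo d (L - 1)).2) = 0 ∧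
    ∑ n ∈ S, (edCombUpTo d (L - 1)).1 {n} / (1 - (edCombUpTo d (L - 1)).2) = 1 := by
  -- basic facts about each discounted BBA
  have hdj : ∀ j < L,
      (∀ A, A ∉ S.image (fun n => ({n} : Finset (Fin N))) → (d j).1 A = 0) ∧
        (∑ A, (d j).1 A) + (d j).2 = 1 := by
    intro j hj
    have hβtot : (∑ n : Fin N, β j n) = 1 := by
      rw [← hβsum j hj]
      exact (Finset.sum_subset (Finset.subset_univ S)
        (fun x _ hx => hβS j hj x hx)).symm
    have hassess : ∀ A : Finset (Fin N), assessBBA (β j) A =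
        (if A = Finset.univ then 1 - ∑ n : Fin N, β j n else 0) +
          ∑ n : Fin N, if A = {n} then β j n else 0 := by
      intro A
      by_cases hA : A = Finset.univ
      · subst hA
        simp only [assessBBA, if_pos rfl]
        have : (∑ n : Fin N, if (Finset.univ : Finset (Fin N)) = {n} then β j n else 0)
            = 0 := by
          apply Finset.sum_eq_zero
          intro n _
          rw [if_neg (fun h => singleton_ne_univ' hN n h.symm)]
        rw [this]; ring
      · simp only [assessBBA, if_neg hA]; ring
    constructor
    · intro A hA
      rw [hd j]
      simp only [impDiscount]
      have : assessBBA (β j) A = 0 := by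
        rw [hassess A]
        have h1 : (if A = Finset.univ then 1 - ∑ n : Fin N, β j n else 0) = 0 := by
          split_ifs with h
          · rw [hβtot]; ring
          · rfl
        have h2 : (∑ n : Fin N, if A = {n} then β j n else 0) = 0 := by
          apply Finset.sum_eq_zero
          intro n _
          split_ifs with h
          · subst h
            by_cases hn : n ∈ S
            · exact absurd (Finset.mem_image.mpr ⟨n, hn, rfl⟩) hA
            · exact hβS j hj n hn
          · rfl
        rw [h1, h2]; ring
      rw [this]; ring
    · rw [hd j]
      simp only [impDiscount]
      have : (∑ A : Finset (Fin N), assessBBA (β j) A) = 1 := by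
        rw [Finset.sum_congr rfl (fun A _ => hassess A), Finset.sum_add_distrib]
        have h1 : (∑ A : Finset (Fin N),
            if A = Finset.univ then 1 - ∑ n : Fin N, β j n else 0)
            = 1 - ∑ n : Fin N, β j n := by
          simp [Finset.sum_ite_eq']
        have h2 : (∑ A : Finset (Fin N), ∑ n : Fin N, if A = {n} then β j n else 0)
            = ∑ n : Fin N, β j n := by
          rw [Finset.sum_comm]
          apply Finset.sum_congr rfl
          intro n _
          simp [Finset.sum_ite_eq']
        rw [h1, h2]; ring
      rw [← Finset.mul_sum, this]; ring
  -- the invariant through the iterated combination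
  have key : ∀ i, i < L →
      (∀ A, A ∉ S.image (fun n => ({n} : Finset (Fin N))) → (edCombUpTo d i).1 A = 0) ∧
        (∑ A, (edCombUpTo d i).1 A) + (edCombUpTo d i).2 = 1 := by
    intro i
    induction i with
    | zero => intro hi; simpa [edCombUpTo] using hdj 0 hi
    | succ i ih =>
      intro hi
      have hprev := ih (by omega)
      have hnext := hdj (i + 1) hi
      have := edComb_inv S (edCombUpTo d i) (d (i + 1)) hprev.1 hnext.1 hprev.2 hnext.2
        (hconf i hi)
      simpa [edCombUpTo] using this
  obtain ⟨hsupp, htot⟩ := key (L - 1) (by omega)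
  have hωne : (1 : ℝ) - (edCombUpTo d (L - 1)).2 ≠ 0 := by linarith
  refine ⟨?_, ?_, ?_⟩
  · intro n hn
    have : ({n} : Finset (Fin N)) ∉ S.image (fun n => ({n} : Finset (Fin N))) := by
      intro hmem
      obtain ⟨a, ha, hae⟩ := Finset.mem_image.mp hmem
      rw [Finset.singleton_inj] at hae
      exact hn (hae ▸ ha)
    rw [hsupp _ this]; ring
  · have : (Finset.univ : Finset (Fin N)) ∉ S.image (fun n => ({n} : Finset (Fin N))) := by
      intro hmem
      obtain ⟨a, _, hae⟩ := Finset.mem_image.mp hmem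
      exact singleton_ne_univ' hN a hae
    rw [hsupp _ this]; ring
  · rw [← Finset.sum_div]
    have h1 : (∑ n ∈ S, (edCombUpTo d (L - 1)).1 {n})
        = ∑ A ∈ S.image (fun n => ({n} : Finset (Fin N))), (edCombUpTo d (L - 1)).1 A :=
      (Finset.sum_image (fun a _ b _ h => Finset.singleton_inj.mp h)).symm
    have h2 : (∑ A ∈ S.image (fun n => ({n} : Finset (Fin N))), (edCombUpTo d (L - 1)).1 A)
        = ∑ A : Finset (Fin N), (edCombUpTo d (L - 1)).1 A :=
      Finset.sum_subset (Finset.subset_univ _) (fun A _ hA => hsupp A hA)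
    rw [h1, h2]
    have : (∑ A : Finset (Fin N), (edCombUpTo d (L - 1)).1 A)
        = 1 - (edCombUpTo d (L - 1)).2 := by linarith
    rw [this, div_self hωne]
end
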